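/- arXiv:0712.0556 — 11 statements merged into one kernel-verified Lean document; each statement's English description precedes it below -/
import Mathlib

section
/- Let $I_1,\dots,I_n$ be independent Bernoulli random variables (with possibly different parameters $p_i$) and let $X_n = \sum_{i=1}^n I_i$. Then the sequence $u(i) = \Pr[X_n = i]$ is log-concave: $u(i)^2 \ge u(i-1)u(i+1)$ for all $1 \le i \le n-1$. -/
/-!
The law of `X_n` is the coefficient sequence of `∏ j, ((1 - p j) + p j X)`. Log-concavity alone is
not preserved by multiplication with a factor `q + r X` (internal zeros break it: `1 + X³`), so we
carry the stronger PF₂ (Pólya frequency) property `a i a (j+1) ≤ a (i+1) a j` for `i ≤ j`. It is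
preserved by such a factor, since the new sequence `q a k + r a (k-1)` gives a quadratic form in
`q, r` whose three coefficients are PF₂ inequalities for `a` at suitably shifted indices.
-/

open Finset Polynomial

def IsPF2 (a : ℕ → ℝ) : Prop :=
  (∀ k, 0 ≤ a k) ∧ ∀ i j, i ≤ j → a i * a (j + 1) ≤ a (i + 1) * a j

namespace IsPF2

variable {a : ℕ → ℝ}

theorem mul_le_mul_add_two (ha : IsPF2 a) {i j : ℕ} (hij : i ≤ j) :
    a i * a (j + 2) ≤ a (i + 2) * a j := by
  obtain rfl | hlt := hij.eq_or_lt
  · exact (mul_comm _ _).le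
  · calc a i * a (j + 2) ≤ a (i + 1) * a (j + 1) := ha.2 i (j + 1) (by omega)
      _ ≤ a (i + 2) * a j := ha.2 (i + 1) j hlt

theorem mul_le_sq (ha : IsPF2 a) (k : ℕ) : a k * a (k + 2) ≤ a (k + 1) ^ 2 := by
  simpa [sq] using ha.2 k (k + 1) k.le_succ

theorem of_linear_recurrence {b : ℕ → ℝ} {q r : ℝ} (ha : IsPF2 a) (hq : 0 ≤ q) (hr : 0 ≤ r)
    (hb₀ : b 0 = q * a 0) (hb : ∀ k, b (k + 1) = q * a (k + 1) + r * a k) : IsPF2 b := by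
  have ha₀ := ha.1
  refine ⟨fun k => ?_, fun i j hij => ?_⟩
  · cases k with
    | zero => rw [hb₀]; exact mul_nonneg hq (ha₀ 0)
    | succ k => rw [hb]; have := ha₀ k; have := ha₀ (k + 1); positivity
  match i, j, hij with
  | 0, 0, _ => exact (mul_comm _ _).le
  | 0, j + 1, _ =>
    rw [hb₀, hb, hb, hb]
    linear_combination q ^ 2 * ha.2 0 (j + 1) (by omega) + q * r * mul_nonneg (ha₀ 1) (ha₀ j)
      + r ^ 2 * mul_nonneg (ha₀ 0) (ha₀ j)
  | i + 1, j + 1, hij =>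
    rw [hb, hb, hb, hb]
    linear_combination q ^ 2 * ha.2 (i + 1) (j + 1) (by omega) + r ^ 2 * ha.2 i j (by omega)
      + q * r * ha.mul_le_mul_add_two (Nat.le_of_succ_le_succ hij)

end IsPF2

theorem Polynomial.isPF2_coeff_C_add_C_mul_X_mul {f : ℝ[X]} {q r : ℝ} (hf : IsPF2 f.coeff)
    (hq : 0 ≤ q) (hr : 0 ≤ r) : IsPF2 ((C q + C r * X) * f).coeff := by
  have h : (C q + C r * X) * f = C q * f + C r * (X * f) := by ring
  refine hf.of_linear_recurrence hq hr ?_ fun k => ?_ <;>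
    simp only [h, coeff_add, coeff_C_mul, coeff_X_mul, coeff_X_mul_zero, mul_zero, add_zero]

theorem Polynomial.isPF2_coeff_prod_C_add_C_mul_X {ι : Type*} (s : Finset ι) {q r : ι → ℝ}
    (hq : ∀ j, 0 ≤ q j) (hr : ∀ j, 0 ≤ r j) :
    IsPF2 (∏ j ∈ s, (C (q j) + C (r j) * X)).coeff := by
  classical
  induction s using Finset.induction_on with
  | empty =>
    refine ⟨fun k => ?_, fun i j _ => ?_⟩ <;> rw [prod_empty]
    · rw [coeff_one]; positivity
    · rw [coeff_one (n := j + 1), if_neg j.succ_ne_zero, mul_zero]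
      rw [coeff_one, coeff_one]; positivity
  | insert j s hj ih =>
    rw [prod_insert hj]
    exact isPF2_coeff_C_add_C_mul_X_mul ih (hq j) (hr j)

theorem Polynomial.coeff_prod_C_add_C_mul_X {ι R : Type*} [Fintype ι] [DecidableEq ι]
    [CommSemiring R] (f g : ι → R) (k : ℕ) :
    (∏ j, (C (g j) + C (f j) * X)).coeff k =
      ∑ b ∈ univ.filter (fun b : ι → Bool => (univ.filter (fun j => b j = true)).card = k),
        ∏ j, (if b j then f j else g j) := by
  have factor (j : ι) : C (g j) + C (f j) * X =
      ∑ x : Bool, C (if x then f j else g j) * X ^ (if x then 1 else 0) := by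
    simp [add_comm]
  have term (b : ι → Bool) : ∏ j, C (if b j then f j else g j) * X ^ (if b j then 1 else 0) =
      C (∏ j, if b j then f j else g j) * X ^ (univ.filter (fun j => b j = true)).card := by
    rw [prod_mul_distrib, map_prod, prod_pow_eq_pow_sum, sum_boole, Nat.cast_id]
  simp only [factor]
  rw [Fintype.prod_sum]
  simp only [term, finsetSum_coeff, coeff_C_mul_X_pow, sum_filter, eq_comm (a := k)]

/-- The probability mass function of a sum of independent Bernoulli random
variables with parameters `p i`: `u i = Pr[X_n = i]`, expressed as a sum over
0-1 configurations with exactly `i` ones, is log-concave. -/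
theorem bernoulli_sum_pmf_log_concave (n : ℕ) (p : Fin n → ℝ)
    (hp : ∀ i, 0 ≤ p i) (hp1 : ∀ i, p i ≤ 1) (u : ℕ → ℝ)
    (hu : ∀ i : ℕ, u i =
      ∑ b ∈ Finset.univ.filter
        (fun b : Fin n → Bool => (Finset.univ.filter (fun j => b j = true)).card = i),
        ∏ j : Fin n, (if b j then p j else 1 - p j)) :
    ∀ i : ℕ, 1 ≤ i → i ≤ n - 1 → u (i - 1) * u (i + 1) ≤ u i ^ 2 := by
  intro i hi _
  obtain ⟨k, rfl⟩ : ∃ k, i = k + 1 := ⟨i - 1, by omega⟩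
  have hu_coeff : u = (∏ j, (C (1 - p j) + C (p j) * X)).coeff :=
    funext fun k => (hu k).trans (coeff_prod_C_add_C_mul_X p (fun j => 1 - p j) k).symm
  have hPF2 : IsPF2 u := hu_coeff ▸
    isPF2_coeff_prod_C_add_C_mul_X univ (fun j => sub_nonneg.2 (hp1 j)) hp
  exact hPF2.mul_le_sq k
end

section
/- If $(a_i)_{i\ge 0}$ and $(b_i)_{i\ge 0}$ are nonnegative log-concave sequences, then their convolution $c_k = \sum_{i=0}^k a_i b_{k-i}$ is log-concave. -/
/-!
Let `T a` be the lower-triangular Toeplitz matrix `(a (i - j))`. For a nonnegative log-concave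
sequence without internal zeros, the `2 × 2` minors of `T a` in two adjacent rows, or in two
adjacent columns, are nonnegative. The convolution satisfies `T c = T b * T a`, and
`c k ^ 2 - c (k - 1) * c (k + 1)` is the minor of `T c` on rows `k, k + 1` and columns `0, 1`.
By the Cauchy–Binet formula it is a sum of products of such minors of `T b` and of `T a`.
-/

open Finset

section LogConcave

variable {K : Type*} [Field K] [LinearOrder K] [IsStrictOrderedRing K] {a : ℕ → K}

theorem mul_succ_le_succ_mul_of_logConcave (ha0 : ∀ i, 0 ≤ a i)
    (ha : ∀ i, 1 ≤ i → a (i - 1) * a (i + 1) ≤ a i ^ 2)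
    (ha' : ∀ i j k : ℕ, i ≤ j → j ≤ k → 0 < a i → 0 < a k → 0 < a j)
    {x y : ℕ} (hxy : x ≤ y) : a x * a (y + 1) ≤ a (x + 1) * a y := by
  induction y, hxy using Nat.le_induction with
  | base => rw [mul_comm]
  | succ y hxy ih =>
    have hrhs : 0 ≤ a (x + 1) * a (y + 1) := mul_nonneg (ha0 _) (ha0 _)
    rcases (ha0 x).eq_or_lt with hx | hx
    · simpa [← hx] using hrhs
    rcases (ha0 (y + 2)).eq_or_lt with hy | hy
    · simpa [← hy] using hrhs
    have hmid : 0 < a (y + 1) := ha' x (y + 1) (y + 2) (by omega) (by omega) hx hy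
    have hlc : a y * a (y + 2) ≤ a (y + 1) ^ 2 := by simpa using ha (y + 1) (by omega)
    refine le_of_mul_le_mul_right ?_ hmid
    calc a x * a (y + 1 + 1) * a (y + 1) = a x * a (y + 1) * a (y + 2) := by ring
      _ ≤ a (x + 1) * a y * a (y + 2) := by gcongr
      _ = a (x + 1) * (a y * a (y + 2)) := by ring
      _ ≤ a (x + 1) * a (y + 1) ^ 2 := by gcongr; exact ha0 _
      _ = a (x + 1) * a (y + 1) * a (y + 1) := by ring

end LogConcave

section CauchyBinet

theorem sum_range_sum_range_eq_sum_lt_add_diag {M : Type*} [AddCommMonoid M]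
    (f : ℕ → ℕ → M) (N : ℕ) :
    ∑ i ∈ range N, ∑ j ∈ range N, f i j
      = ∑ i ∈ range N, ∑ j ∈ range i, (f i j + f j i) + ∑ i ∈ range N, f i i := by
  induction N with
  | zero => simp
  | succ N ih =>
    simp only [sum_range_succ, sum_add_distrib] at *
    rw [ih]
    abel

variable {R : Type*} [CommRing R] (p q r s : ℕ → R) (N : ℕ)

theorem sum_mul_sum_sub_sum_mul_sum :
    (∑ m ∈ range N, p m * r m) * (∑ m ∈ range N, q m * s m)
      - (∑ m ∈ range N, q m * r m) * (∑ m ∈ range N, p m * s m)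
    = ∑ i ∈ range N, ∑ j ∈ range i, (p j * q i - p i * q j) * (r j * s i - r i * s j) := by
  simp only [sum_mul_sum, ← sum_sub_distrib]
  have hdiag : ∑ i ∈ range N, (p i * r i * (q i * s i) - q i * r i * (p i * s i)) = 0 :=
    sum_eq_zero fun i _ => by ring
  rw [sum_range_sum_range_eq_sum_lt_add_diag, hdiag, add_zero]
  exact sum_congr rfl fun i _ => sum_congr rfl fun j _ => by ring

theorem sum_mul_sum_le_sum_mul_sum [PartialOrder R] [IsOrderedRing R]
    (hpq : ∀ i j, j < i → i < N → p i * q j ≤ p j * q i)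
    (hrs : ∀ i j, j < i → i < N → r i * s j ≤ r j * s i) :
    (∑ m ∈ range N, q m * r m) * (∑ m ∈ range N, p m * s m)
      ≤ (∑ m ∈ range N, p m * r m) * (∑ m ∈ range N, q m * s m) := by
  rw [← sub_nonneg, sum_mul_sum_sub_sum_mul_sum]
  refine sum_nonneg fun i hi => sum_nonneg fun j hj => ?_
  rw [mem_range] at hi hj
  exact mul_nonneg (sub_nonneg.2 (hpq i j hj hi)) (sub_nonneg.2 (hrs i j hj hi))

end CauchyBinet

def lowerToeplitz {R : Type*} [Zero R] (a : ℕ → R) (i j : ℕ) : R :=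
  if j ≤ i then a (i - j) else 0

section LowerToeplitz

theorem sum_lowerToeplitz_mul_lowerToeplitz {R : Type*} [NonUnitalNonAssocSemiring R]
    (a b : ℕ → R) {i j N : ℕ} (hji : j ≤ i) (hiN : i < N) :
    ∑ m ∈ range N, lowerToeplitz a m j * lowerToeplitz b i m
      = ∑ m ∈ range (i - j + 1), a m * b (i - j - m) := by
  obtain ⟨k, rfl⟩ := Nat.exists_eq_add_of_le hji
  obtain ⟨t, rfl⟩ : ∃ t, N = j + (k + 1) + t := ⟨N - (j + k + 1), by omega⟩
  have hlow : ∀ m ∈ range j, lowerToeplitz a m j * lowerToeplitz b (j + k) m = 0 := by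
    intro m hm
    rw [mem_range] at hm
    simp [lowerToeplitz, hm.not_ge]
  have hhigh : ∀ m ∈ range t,
      lowerToeplitz a (j + (k + 1) + m) j * lowerToeplitz b (j + k) (j + (k + 1) + m) = 0 := by
    intro m _
    simp [lowerToeplitz, show ¬ j + (k + 1) + m ≤ j + k by omega]
  rw [sum_range_add, sum_range_add, sum_eq_zero hlow, sum_eq_zero hhigh, zero_add, add_zero,
    Nat.add_sub_cancel_left]
  refine sum_congr rfl fun m hm => ?_
  rw [mem_range] at hm
  simp [lowerToeplitz, show m ≤ k by omega, Nat.add_sub_add_left]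

theorem lowerToeplitz_nonneg {R : Type*} [Zero R] [Preorder R] {a : ℕ → R}
    (ha0 : ∀ i, 0 ≤ a i) (i j : ℕ) : 0 ≤ lowerToeplitz a i j := by
  unfold lowerToeplitz
  split_ifs
  exacts [ha0 _, le_rfl]

variable {K : Type*} [Field K] [LinearOrder K] [IsStrictOrderedRing K] {a : ℕ → K}

theorem lowerToeplitz_minor_succ_row_of_logConcave (ha0 : ∀ i, 0 ≤ a i)
    (ha : ∀ i, 1 ≤ i → a (i - 1) * a (i + 1) ≤ a i ^ 2)
    (ha' : ∀ i j k : ℕ, i ≤ j → j ≤ k → 0 < a i → 0 < a k → 0 < a j)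
    (r : ℕ) {i j : ℕ} (hji : j ≤ i) :
    lowerToeplitz a r i * lowerToeplitz a (r + 1) j
      ≤ lowerToeplitz a r j * lowerToeplitz a (r + 1) i := by
  by_cases hir : i ≤ r
  · have h := mul_succ_le_succ_mul_of_logConcave ha0 ha ha' (show r - i ≤ r - j by omega)
    rw [show r - j + 1 = r + 1 - j by omega, show r - i + 1 = r + 1 - i by omega] at h
    have hir' : i ≤ r + 1 := hir.trans r.le_succ
    simpa [lowerToeplitz, hir, hir', hji.trans hir, hji.trans hir', mul_comm] using h
  · simpa [lowerToeplitz, hir] using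
      mul_nonneg (lowerToeplitz_nonneg ha0 r j) (lowerToeplitz_nonneg ha0 (r + 1) i)

theorem lowerToeplitz_minor_succ_col_of_logConcave (ha0 : ∀ i, 0 ≤ a i)
    (ha : ∀ i, 1 ≤ i → a (i - 1) * a (i + 1) ≤ a i ^ 2)
    (ha' : ∀ i j k : ℕ, i ≤ j → j ≤ k → 0 < a i → 0 < a k → 0 < a j)
    (s : ℕ) {i j : ℕ} (hji : j ≤ i) :
    lowerToeplitz a i s * lowerToeplitz a j (s + 1)
      ≤ lowerToeplitz a j s * lowerToeplitz a i (s + 1) := by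
  by_cases hsj : s + 1 ≤ j
  · have h :=
      mul_succ_le_succ_mul_of_logConcave ha0 ha ha' (show j - (s + 1) ≤ i - (s + 1) by omega)
    rw [show i - (s + 1) + 1 = i - s by omega, show j - (s + 1) + 1 = j - s by omega] at h
    have hsj' : s ≤ j := s.le_succ.trans hsj
    simpa [lowerToeplitz, hsj, hsj', hsj.trans hji, hsj'.trans hji, mul_comm] using h
  · simpa [lowerToeplitz, hsj] using
      mul_nonneg (lowerToeplitz_nonneg ha0 j s) (lowerToeplitz_nonneg ha0 i (s + 1))

end LowerToeplitz

/-- Hoggar's theorem: the convolution of two nonnegative log-concave sequences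
with no internal zeros is log-concave. -/
theorem convolution_log_concave (a b : ℕ → ℝ)
    (ha0 : ∀ i, 0 ≤ a i) (hb0 : ∀ i, 0 ≤ b i)
    (ha : ∀ i, 1 ≤ i → a (i - 1) * a (i + 1) ≤ a i ^ 2)
    (hb : ∀ i, 1 ≤ i → b (i - 1) * b (i + 1) ≤ b i ^ 2)
    (ha' : ∀ i j k : ℕ, i ≤ j → j ≤ k → 0 < a i → 0 < a k → 0 < a j)
    (hb' : ∀ i j k : ℕ, i ≤ j → j ≤ k → 0 < b i → 0 < b k → 0 < b j)
    (c : ℕ → ℝ) (hc : ∀ k, c k = ∑ i ∈ Finset.range (k + 1), a i * b (k - i)) :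
    ∀ k, 1 ≤ k → c (k - 1) * c (k + 1) ≤ c k ^ 2 := by
  intro k hk
  obtain ⟨n, rfl⟩ : ∃ n, k = n + 1 := ⟨k - 1, by omega⟩
  have h := sum_mul_sum_le_sum_mul_sum
    (fun m => lowerToeplitz a m 0) (fun m => lowerToeplitz a m 1) (lowerToeplitz b (n + 1))
    (lowerToeplitz b (n + 2)) (n + 3)
    (fun i j hji _ => lowerToeplitz_minor_succ_col_of_logConcave ha0 ha ha' 0 hji.le)
    (fun i j hji _ => lowerToeplitz_minor_succ_row_of_logConcave hb0 hb hb' (n + 1) hji.le)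
  have hconv : ∀ i j, j ≤ i → i < n + 3 →
      ∑ m ∈ range (n + 3), lowerToeplitz a m j * lowerToeplitz b i m = c (i - j) :=
    fun i j hji hi => by rw [hc, sum_lowerToeplitz_mul_lowerToeplitz a b hji hi]
  rw [hconv (n + 1) 1 (by omega) (by omega), hconv (n + 1) 0 (by omega) (by omega),
    hconv (n + 2) 0 (by omega) (by omega), hconv (n + 2) 1 (by omega) (by omega)] at h
  simpa [sq] using h
end

section
/- Let $I_1,\dots,I_n$ be independent Bernoulli random variables and let $\phi: \{0,1\}^n \to \mathbb{R}_{\ge 0}$ be increasing in each coordinate. Then for every $0 \le k \le n-1$ with $\Pr[\sum_i I_i = k] > 0$ and $\Pr[\sum_i I_i = k+1] > 0$, $E[\phi(I_1,\dots,I_n) \mid \sum_{i=1}^n I_i = k] \le E[\phi(I_1,\dots,I_n) \mid \sum_{i=1}^n I_i = k+1]$. -/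
/-!
Identify `b : Fin n → Bool` with the set `A` of its true coordinates. The product weight `w`
satisfies `w A * w B = w (A ∩ B) * w (A ∪ B)`, and after clearing denominators the claim reads
`∑ w A * w B * f A ≤ ∑ w A * w B * f B` over pairs with `#A = k`, `#B = k + 1`. Spread the weight of
such a pair evenly over the elements `i ∈ B \ A` and bound `f A ≤ f (insert i A)`. The switch
`(A, B, i) ↦ (B.erase i, insert i A, i)` is an involution of these triples which keeps `A ∩ B`,
`A ∪ B` (hence `w A * w B`) and `#(B \ A)`, and it turns `f (insert i A)` into the `f B` of the
image triple.
-/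

open Finset

namespace Finset

variable {ι : Type*} [DecidableEq ι]

theorem prod_ite_mem_mul_prod_ite_mem {M : Type*} [CommMonoid M] (s A B : Finset ι)
    (a b : ι → M) :
    (∏ j ∈ s, if j ∈ A then a j else b j) * (∏ j ∈ s, if j ∈ B then a j else b j) =
      (∏ j ∈ s, if j ∈ A ∩ B then a j else b j) * ∏ j ∈ s, if j ∈ A ∪ B then a j else b j := by
  simp_rw [← prod_mul_distrib, mem_inter, mem_union]
  refine prod_congr rfl fun j _ => ?_
  by_cases hA : j ∈ A <;> by_cases hB : j ∈ B <;> simp [hA, hB, mul_comm]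

variable {A B : Finset ι} {i : ι}

theorem erase_inter_insert (hi : i ∉ A) : B.erase i ∩ insert i A = A ∩ B := by
  ext j; by_cases j = i <;> aesop

theorem erase_union_insert (hi : i ∈ B) : B.erase i ∪ insert i A = A ∪ B := by
  ext j; by_cases j = i <;> aesop

theorem card_insert_sdiff_erase (hAB : #B = #A + 1) (hi : i ∈ B \ A) :
    #(insert i A \ B.erase i) = #(B \ A) := by
  rw [mem_sdiff] at hi
  have hinsert : insert i A \ B.erase i = insert i (A \ B) := by
    ext j; by_cases j = i <;> aesop
  have hA := card_sdiff_add_card_inter A B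
  have hB := card_sdiff_add_card_inter B A
  rw [inter_comm] at hB
  rw [hinsert, card_insert_of_notMem (by simp [hi.1])]
  omega

end Finset

namespace Efron

variable {ι : Type*} {U : Finset ι} {k : ℕ}

def slicePairs (U : Finset ι) (k : ℕ) : Finset (Finset ι × Finset ι) :=
  powersetCard k U ×ˢ powersetCard (k + 1) U

theorem sum_mul_sum_eq_sum_slicePairs (w g h : Finset ι → ℝ) :
    (∑ A ∈ powersetCard k U, w A * g A) * ∑ B ∈ powersetCard (k + 1) U, w B * h B =
      ∑ P ∈ slicePairs U k, w P.1 * w P.2 * (g P.1 * h P.2) := by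
  rw [sum_mul_sum, slicePairs, sum_product]
  exact sum_congr rfl fun A _ => sum_congr rfl fun B _ => by ring

variable [DecidableEq ι]

def switchTriples (U : Finset ι) (k : ℕ) : Finset (Σ _ : Finset ι × Finset ι, ι) :=
  (slicePairs U k).sigma fun P => P.2 \ P.1

def switch (x : Σ _ : Finset ι × Finset ι, ι) : Σ _ : Finset ι × Finset ι, ι :=
  ⟨(x.1.2.erase x.2, insert x.2 x.1.1), x.2⟩

theorem switch_mem {x : Σ _ : Finset ι × Finset ι, ι} (hx : x ∈ switchTriples U k) :
    switch x ∈ switchTriples U k := by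
  obtain ⟨⟨A, B⟩, i⟩ := x
  simp only [switchTriples, slicePairs, switch, mem_sigma, mem_product, mem_powersetCard,
    mem_sdiff] at hx ⊢
  obtain ⟨⟨⟨hAU, hA⟩, hBU, hB⟩, hiB, hiA⟩ := hx
  refine ⟨⟨⟨(erase_subset _ _).trans hBU, ?_⟩, insert_subset (hBU hiB) hAU, ?_⟩, ?_⟩
  · rw [card_erase_of_mem hiB, hB]; rfl
  · rw [card_insert_of_notMem hiA, hA]
  · simp

theorem switch_switch {x : Σ _ : Finset ι × Finset ι, ι} (hx : x ∈ switchTriples U k) :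
    switch (switch x) = x := by
  obtain ⟨⟨A, B⟩, i⟩ := x
  simp only [switchTriples, mem_sigma, mem_sdiff] at hx
  simp [switch, erase_insert hx.2.2, insert_erase hx.2.1]

theorem sum_sum_sdiff_switch {M : Type*} [AddCommMonoid M] (F : Finset ι → Finset ι → ι → M) :
    ∑ P ∈ slicePairs U k, ∑ i ∈ P.2 \ P.1, F P.1 P.2 i =
      ∑ P ∈ slicePairs U k, ∑ i ∈ P.2 \ P.1, F (P.2.erase i) (insert i P.1) i := by
  rw [sum_sigma', sum_sigma']
  refine sum_nbij' switch switch (fun _ => switch_mem) (fun _ => switch_mem)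
    (fun _ => switch_switch) (fun _ => switch_switch) fun x hx => ?_
  exact congrArg (fun y => F y.1.1 y.1.2 y.2) (switch_switch hx).symm

theorem sum_slicePairs_mul_le {w f : Finset ι → ℝ} (hw0 : ∀ A, 0 ≤ w A)
    (hw : ∀ A B, w A * w B = w (A ∩ B) * w (A ∪ B)) (hf : Monotone f) :
    ∑ P ∈ slicePairs U k, w P.1 * w P.2 * f P.1 ≤ ∑ P ∈ slicePairs U k, w P.1 * w P.2 * f P.2 := by
  let c : Finset ι → Finset ι → ℝ := fun A B => w A * w B / #(B \ A)
  have sum_c : ∀ P ∈ slicePairs U k, ∑ _i ∈ P.2 \ P.1, c P.1 P.2 = w P.1 * w P.2 := by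
    rintro ⟨A, B⟩ hP
    simp only [slicePairs, mem_product, mem_powersetCard] at hP
    have hBA : #(B \ A) ≠ 0 := by
      have := card_le_card_sdiff_add_card (s := B) (t := A)
      omega
    rw [sum_const, nsmul_eq_mul]
    exact mul_div_cancel₀ _ (Nat.cast_ne_zero.2 hBA)
  have c_switch : ∀ P ∈ slicePairs U k, ∀ i ∈ P.2 \ P.1,
      c (P.2.erase i) (insert i P.1) = c P.1 P.2 := by
    rintro ⟨A, B⟩ hP i hi
    simp only [slicePairs, mem_product, mem_powersetCard] at hP
    dsimp only at hi
    simp only [c]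
    rw [hw, erase_inter_insert (mem_sdiff.1 hi).2, erase_union_insert (mem_sdiff.1 hi).1, ← hw,
      card_insert_sdiff_erase (by omega) hi]
  have spread : ∀ g : Finset ι × Finset ι → ℝ, ∑ P ∈ slicePairs U k, w P.1 * w P.2 * g P =
      ∑ P ∈ slicePairs U k, ∑ _i ∈ P.2 \ P.1, c P.1 P.2 * g P := fun g =>
    sum_congr rfl fun P hP => by rw [← sum_mul, sum_c P hP]
  calc ∑ P ∈ slicePairs U k, w P.1 * w P.2 * f P.1
      = ∑ P ∈ slicePairs U k, ∑ _i ∈ P.2 \ P.1, c P.1 P.2 * f P.1 := spread _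
    _ ≤ ∑ P ∈ slicePairs U k, ∑ i ∈ P.2 \ P.1, c P.1 P.2 * f (insert i P.1) :=
        sum_le_sum fun P _ => sum_le_sum fun i _ => mul_le_mul_of_nonneg_left
          (hf (subset_insert _ _)) (div_nonneg (mul_nonneg (hw0 _) (hw0 _)) (Nat.cast_nonneg _))
    _ = ∑ P ∈ slicePairs U k, ∑ _i ∈ P.2 \ P.1, c P.1 P.2 * f P.2 := by
        rw [sum_sum_sdiff_switch (fun A B _ => c A B * f B)]
        exact sum_congr rfl fun P hP => sum_congr rfl fun i hi => by rw [c_switch P hP i hi]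
    _ = ∑ P ∈ slicePairs U k, w P.1 * w P.2 * f P.2 := (spread _).symm

theorem sum_powersetCard_mul_sum_le {w f : Finset ι → ℝ} (hw0 : ∀ A, 0 ≤ w A)
    (hw : ∀ A B, w A * w B = w (A ∩ B) * w (A ∪ B)) (hf : Monotone f) (U : Finset ι) (k : ℕ) :
    (∑ A ∈ powersetCard k U, w A * f A) * ∑ B ∈ powersetCard (k + 1) U, w B ≤
      (∑ A ∈ powersetCard k U, w A) * ∑ B ∈ powersetCard (k + 1) U, w B * f B := by
  have hleft := sum_mul_sum_eq_sum_slicePairs (U := U) (k := k) w f 1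
  have hright := sum_mul_sum_eq_sum_slicePairs (U := U) (k := k) w 1 f
  simp only [Pi.one_apply, mul_one, one_mul] at hleft hright
  rw [hleft, hright]
  exact sum_slicePairs_mul_le hw0 hw hf

end Efron

theorem Fintype.sum_filter_card_eq_sum_powersetCard {ι M : Type*} [Fintype ι] [DecidableEq ι]
    [AddCommMonoid M] (m : ℕ) (G : (ι → Bool) → M) :
    ∑ b ∈ univ.filter (fun b : ι → Bool => #(univ.filter fun j => b j = true) = m), G b =
      ∑ A ∈ powersetCard m univ, G (fun j => decide (j ∈ A)) := by
  refine sum_nbij' (fun b => univ.filter fun j => b j = true) (fun A j => decide (j ∈ A))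
    ?_ ?_ ?_ ?_ ?_ <;> intro x hx
  · simpa using hx
  · simpa using mem_powersetCard_univ.1 hx
  · simp
  · ext; simp
  · simp

theorem efron_monotonicity_general (n : ℕ) (p : Fin n → ℝ)
    (hp0 : ∀ i, 0 < p i) (hp1 : ∀ i, p i < 1)
    (φ : (Fin n → Bool) → ℝ)
    (hφmono : ∀ b b' : Fin n → Bool, (∀ i, b i = true → b' i = true) → φ b ≤ φ b')
    (W : (Fin n → Bool) → ℝ)
    (hW : ∀ b, W b = ∏ j : Fin n, (if b j then p j else 1 - p j)) :
    ∀ k : ℕ, k ≤ n - 1 →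
      0 < (∑ b ∈ Finset.univ.filter
            (fun b : Fin n → Bool => (Finset.univ.filter (fun j => b j = true)).card = k),
            W b) →
      0 < (∑ b ∈ Finset.univ.filter
            (fun b : Fin n → Bool => (Finset.univ.filter (fun j => b j = true)).card = k + 1),
            W b) →
      (∑ b ∈ Finset.univ.filter
          (fun b : Fin n → Bool => (Finset.univ.filter (fun j => b j = true)).card = k),
          W b * φ b) /
        (∑ b ∈ Finset.univ.filter
          (fun b : Fin n → Bool => (Finset.univ.filter (fun j => b j = true)).card = k),
          W b) ≤
      (∑ b ∈ Finset.univ.filter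
          (fun b : Fin n → Bool => (Finset.univ.filter (fun j => b j = true)).card = k + 1),
          W b * φ b) /
        (∑ b ∈ Finset.univ.filter
          (fun b : Fin n → Bool => (Finset.univ.filter (fun j => b j = true)).card = k + 1),
          W b) := by
  intro k _ hk hk1
  simp only [Fintype.sum_filter_card_eq_sum_powersetCard] at hk hk1 ⊢
  rw [div_le_div_iff₀ hk hk1]
  have hW' : ∀ A : Finset (Fin n), W (fun j => decide (j ∈ A)) =
      ∏ j, if j ∈ A then p j else 1 - p j := fun A => by simp [hW]
  refine (Efron.sum_powersetCard_mul_sum_le (w := fun A => W (fun j => decide (j ∈ A)))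
    (f := fun A => φ (fun j => decide (j ∈ A))) (fun A => ?_) (fun A B => ?_) ?_ univ k).trans_eq
    (mul_comm _ _)
  · rw [hW']
    exact prod_nonneg fun j _ => by split_ifs <;> linarith [hp0 j, hp1 j]
  · simp only [hW']
    exact prod_ite_mem_mul_prod_ite_mem _ _ _ _ _
  · exact fun A B hAB => hφmono _ _ fun i => by simpa using @hAB i

/-- Efron's monotonicity theorem for independent Bernoulli random variables:
the conditional expectation of a nonnegative coordinatewise-increasing function
given the sum of the variables is increasing in the value of the sum. -/
theorem efron_monotonicity (n : ℕ) (p : Fin n → ℝ)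
    (hp0 : ∀ i, 0 < p i) (hp1 : ∀ i, p i < 1)
    (φ : (Fin n → Bool) → ℝ) (hφ0 : ∀ b, 0 ≤ φ b)
    (hφmono : ∀ b b' : Fin n → Bool, (∀ i, b i = true → b' i = true) → φ b ≤ φ b')
    (W : (Fin n → Bool) → ℝ)
    (hW : ∀ b, W b = ∏ j : Fin n, (if b j then p j else 1 - p j)) :
    ∀ k : ℕ, k ≤ n - 1 →
      0 < (∑ b ∈ Finset.univ.filter
            (fun b : Fin n → Bool => (Finset.univ.filter (fun j => b j = true)).card = k),
            W b) →
      0 < (∑ b ∈ Finset.univ.filter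
            (fun b : Fin n → Bool => (Finset.univ.filter (fun j => b j = true)).card = k + 1),
            W b) →
      (∑ b ∈ Finset.univ.filter
          (fun b : Fin n → Bool => (Finset.univ.filter (fun j => b j = true)).card = k),
          W b * φ b) /
        (∑ b ∈ Finset.univ.filter
          (fun b : Fin n → Bool => (Finset.univ.filter (fun j => b j = true)).card = k),
          W b) ≤
      (∑ b ∈ Finset.univ.filter
          (fun b : Fin n → Bool => (Finset.univ.filter (fun j => b j = true)).card = k + 1),
          W b * φ b) /
        (∑ b ∈ Finset.univ.filter
          (fun b : Fin n → Bool => (Finset.univ.filter (fun j => b j = true)).card = k + 1),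
          W b) :=
  efron_monotonicity_general n p hp0 hp1 φ hφmono W hW
end

section
/- Let $X$ be a $\{0,\dots,n\}$-valued random variable with log-concave probability mass function $u$, and let $I$ be an independent Bernoulli random variable with parameter $p \in (0,1)$. Let $\psi: \{0,\dots,n\} \times \{0,1\} \to \mathbb{R}_{\ge 0}$ be increasing in both arguments. Then for all $0 \le k \le n$, $E[\psi(X,I) \mid X+I = k] \le E[\psi(X,I) \mid X+I = k+1]$, whenever both conditioning events have positive probability. -/
open Finset

/-!
Given `X + I = k`, the pair `(X, I)` is `(k - 1, 1)` or `(k, 0)`, with weights `a = u (k-1) p` and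
`b = u k (1 - p)`; given `X + I = k + 1` it is `(k, 1)` or `(k + 1, 0)`, with weights `c = u k p`
and `d = u (k+1) (1 - p)`. Log-concavity is exactly `a d ≤ b c`: the upper level puts relatively
more mass on its first point. After cross-multiplying, the difference of the two sides is a sum
of nonnegative terms, using only that `ψ` increases from `(k-1, 1)` to `(k, 1)`, from `(k, 0)` to
`(k + 1, 0)` and from `(k, 0)` to `(k, 1)`.
-/

section FiberSum

variable {M : Type*} [AddCommMonoid M]

theorem sum_range_sum_bool_ite_add_eq (n k : ℕ) (g : ℕ → Bool → M) :
    ∑ x ∈ range (n + 1), ∑ j : Bool, (if x + (if j then 1 else 0) = k then g x j else 0) =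
      (if 1 ≤ k ∧ k ≤ n + 1 then g (k - 1) true else 0) + if k ≤ n then g k false else 0 := by
  simp only [Fintype.sum_bool, if_true, if_false, Bool.false_eq_true, add_zero, sum_add_distrib,
    sum_ite_eq' (range (n + 1)) k (fun x => g x false), mem_range, Nat.lt_succ_iff]
  congr 1
  cases k with
  | zero => simp
  | succ m =>
    simp only [add_left_inj, sum_ite_eq' (range (n + 1)) m (fun x => g x true), mem_range,
      Nat.lt_succ_iff, Nat.add_sub_cancel]
    congr 1
    simp

theorem sum_range_sum_bool_ite_add_eq_of_le {n k : ℕ} (hk : k ≤ n) (g : ℕ → Bool → M) :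
    ∑ x ∈ range (n + 1), ∑ j : Bool, (if x + (if j then 1 else 0) = k then g x j else 0) =
      (if 0 < k then g (k - 1) true else 0) + g k false := by
  rw [sum_range_sum_bool_ite_add_eq, if_pos hk]
  congr 1
  exact if_congr (by omega) rfl rfl

theorem sum_range_sum_bool_ite_add_eq_succ {n k : ℕ} (hk : k ≤ n) (g : ℕ → Bool → M) :
    ∑ x ∈ range (n + 1), ∑ j : Bool, (if x + (if j then 1 else 0) = k + 1 then g x j else 0) =
      g k true + if k + 1 ≤ n then g (k + 1) false else 0 := by
  rw [sum_range_sum_bool_ite_add_eq, if_pos (by omega), Nat.add_sub_cancel]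

end FiberSum

theorem mul_add_mul_mul_le_of_mul_le_mul {a b c d α β γ δ : ℝ}
    (ha : 0 ≤ a) (hb : 0 ≤ b) (hc : 0 ≤ c) (hd : 0 ≤ d) (had : a * d ≤ b * c)
    (hαγ : α ≤ γ) (hβδ : β ≤ δ) (hβγ : β ≤ γ) :
    (a * α + b * β) * (c + d) ≤ (c * γ + d * δ) * (a + b) := by
  have := sub_nonneg.2 hαγ; have := sub_nonneg.2 hβδ
  have := sub_nonneg.2 hβγ; have := sub_nonneg.2 had
  rw [← sub_nonneg, show (c * γ + d * δ) * (a + b) - (a * α + b * β) * (c + d) =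
      a * c * (γ - α) + b * d * (δ - β) + a * d * ((γ - α) + (δ - β)) +
        (b * c - a * d) * (γ - β) by ring]
  positivity

theorem ite_mul_ite_le_sq_of_log_concave {n : ℕ} {u : ℕ → ℝ}
    (hulc : ∀ i, 1 ≤ i → i ≤ n - 1 → u (i - 1) * u (i + 1) ≤ u i ^ 2) (k : ℕ) :
    (if 0 < k then u (k - 1) else 0) * (if k + 1 ≤ n then u (k + 1) else 0) ≤ u k ^ 2 := by
  by_cases hk₀ : 0 < k
  · by_cases hkn : k + 1 ≤ n
    · simpa only [if_pos hk₀, if_pos hkn] using hulc k hk₀ (by omega)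
    · simpa only [if_neg hkn, mul_zero] using sq_nonneg (u k)
  · simpa only [if_neg hk₀, zero_mul] using sq_nonneg (u k)

theorem log_concave_plus_bernoulli_monotone_general (n : ℕ) (u : ℕ → ℝ)
    (hu0 : ∀ i, 0 ≤ u i)
    (hulc : ∀ i, 1 ≤ i → i ≤ n - 1 → u (i - 1) * u (i + 1) ≤ u i ^ 2)
    (p : ℝ) (hp0 : 0 < p) (hp1 : p < 1)
    (ψ : ℕ → Bool → ℝ)
    (hψmono : ∀ x x' : ℕ, ∀ j j' : Bool, x ≤ x' → (j = true → j' = true) →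
      ψ x j ≤ ψ x' j')
    (D : ℕ → ℝ) (N : ℕ → ℝ)
    (hD : ∀ k, D k = ∑ x ∈ Finset.range (n + 1), ∑ j : Bool,
      (if x + (if j then 1 else 0) = k then u x * (if j then p else 1 - p) else 0))
    (hN : ∀ k, N k = ∑ x ∈ Finset.range (n + 1), ∑ j : Bool,
      (if x + (if j then 1 else 0) = k then u x * (if j then p else 1 - p) * ψ x j else 0)) :
    ∀ k : ℕ, k ≤ n → 0 < D k → 0 < D (k + 1) →
      N k / D k ≤ N (k + 1) / D (k + 1) := by
  intro k hk hDk hDk1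
  have hq : 0 ≤ 1 - p := by linarith
  set a := (if 0 < k then u (k - 1) else 0) * p with ha
  set d := (if k + 1 ≤ n then u (k + 1) else 0) * (1 - p) with hd
  have had : a * d ≤ u k * (1 - p) * (u k * p) := by
    nlinarith [ite_mul_ite_le_sq_of_log_concave hulc k, mul_nonneg hp0.le hq]
  have hD₀ : D k = a + u k * (1 - p) := by
    simp only [hD, sum_range_sum_bool_ite_add_eq_of_le hk, ha, if_true, Bool.false_eq_true,
      if_false, ite_zero_mul]
  have hD₁ : D (k + 1) = u k * p + d := by
    simp only [hD, sum_range_sum_bool_ite_add_eq_succ hk, hd, if_true, Bool.false_eq_true,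
      if_false, ite_zero_mul]
  have hN₀ : N k = a * ψ (k - 1) true + u k * (1 - p) * ψ k false := by
    simp only [hN, sum_range_sum_bool_ite_add_eq_of_le hk, ha, if_true, Bool.false_eq_true,
      if_false, ite_zero_mul]
  have hN₁ : N (k + 1) = u k * p * ψ k true + d * ψ (k + 1) false := by
    simp only [hN, sum_range_sum_bool_ite_add_eq_succ hk, hd, if_true, Bool.false_eq_true,
      if_false, ite_zero_mul]
  rw [div_le_div_iff₀ hDk hDk1, hD₀, hD₁, hN₀, hN₁]
  exact mul_add_mul_mul_le_of_mul_le_mul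
    (mul_nonneg (ite_nonneg (hu0 _) le_rfl) hp0.le) (mul_nonneg (hu0 k) hq)
    (mul_nonneg (hu0 k) hp0.le) (mul_nonneg (ite_nonneg (hu0 _) le_rfl) hq) had
    (hψmono (k - 1) k true true (by omega) id) (hψmono k (k + 1) false false (by omega) id)
    (hψmono k k false true le_rfl (fun _ => rfl))

/-- Monotonicity of conditional expectation for the sum of a log-concave
variable `X` on `{0,…,n}` and an independent Bernoulli variable `I`:
if `ψ` is nonnegative and increasing in both arguments, then
`E[ψ(X,I) | X+I = k]` is increasing in `k`. -/
theorem log_concave_plus_bernoulli_monotone (n : ℕ) (u : ℕ → ℝ)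
    (hu0 : ∀ i, 0 ≤ u i) (hupmf : ∑ i ∈ Finset.range (n + 1), u i = 1)
    (hulc : ∀ i, 1 ≤ i → i ≤ n - 1 → u (i - 1) * u (i + 1) ≤ u i ^ 2)
    (p : ℝ) (hp0 : 0 < p) (hp1 : p < 1)
    (ψ : ℕ → Bool → ℝ) (hψ0 : ∀ x j, 0 ≤ ψ x j)
    (hψmono : ∀ x x' : ℕ, ∀ j j' : Bool, x ≤ x' → (j = true → j' = true) →
      ψ x j ≤ ψ x' j')
    (D : ℕ → ℝ) (N : ℕ → ℝ)
    (hD : ∀ k, D k = ∑ x ∈ Finset.range (n + 1), ∑ j : Bool,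
      (if x + (if j then 1 else 0) = k then u x * (if j then p else 1 - p) else 0))
    (hN : ∀ k, N k = ∑ x ∈ Finset.range (n + 1), ∑ j : Bool,
      (if x + (if j then 1 else 0) = k then u x * (if j then p else 1 - p) * ψ x j else 0)) :
    ∀ k : ℕ, k ≤ n → 0 < D k → 0 < D (k + 1) →
      N k / D k ≤ N (k + 1) / D (k + 1) :=
  log_concave_plus_bernoulli_monotone_general n u hu0 hulc p hp0 hp1 ψ hψmono D N hD hN
end

section
/- Let $B_1,\dots,B_n$ be independent Bernoulli random variables with $\Pr[B_i=1]=1/i$. Let $A_1,\dots,A_m$ be distinct $k$-subsets of $\{1,\dots,n\}$ and $E_j = \{B_i = 1 \text{ for all } i \in A_j\}$. Then for $1 \le k \le n-1$, $\Pr[E_1 \cup \cdots \cup E_m \mid \sum_{i=1}^n B_i = k] \le \Pr[E_1 \cup \cdots \cup E_m \mid \sum_{i=1}^n B_i = k+1]$. -/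
open Finset

/-!
Identify an outcome `B` with the set `S = {i | B i = 1}`; its probability is the product weight
`∏_{i ∈ S} p i * ∏_{i ∉ S} q i`, and the event `E_1 ∪ ⋯ ∪ E_m` is the up-set of sets containing
some `A_j`. Product weights satisfy the exchange identity `w S * w T = w (S ∪ {x}) * w (T \ {x})`
for `x ∈ T \ S`. Summing `w S * w T / #(T \ S)` over triples `(S, T, x)` with `#S = k`,
`#T = k + 1`, `x ∈ T \ S`, the exchange `(S, T, x) ↦ (T \ {x}, S ∪ {x}, x)` is weight-preserving
and maps `S` in the up-set to `S ∪ {x}` in the up-set, which gives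
`U k * Z (k + 1) ≤ U (k + 1) * Z k`.
-/

section ProductWeight

variable {α R : Type*} [Fintype α] [DecidableEq α]

def productWeight [CommMonoid R] (p q : α → R) (S : Finset α) : R :=
  ∏ i, if i ∈ S then p i else q i

lemma productWeight_mul_productWeight_insert_erase [CommMonoid R] {p q : α → R}
    {S T : Finset α} {x : α} (hxS : x ∉ S) (hxT : x ∈ T) :
    productWeight p q S * productWeight p q T =
      productWeight p q (insert x S) * productWeight p q (T.erase x) := by
  simp only [productWeight, ← prod_mul_distrib]
  refine prod_congr rfl fun i _ => ?_
  obtain rfl | hix := eq_or_ne i x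
  · simp [hxS, hxT, mul_comm]
  · simp [hix]

variable [CommSemiring R] [PartialOrder R] {p q : α → R}

lemma productWeight_nonneg [IsOrderedRing R] (hp : 0 ≤ p) (hq : 0 ≤ q) (S : Finset α) :
    0 ≤ productWeight p q S :=
  prod_nonneg fun i _ => by split_ifs; exacts [hp i, hq i]

lemma productWeight_pos [IsStrictOrderedRing R] {S : Finset α} (hp : ∀ i ∈ S, 0 < p i)
    (hq : ∀ i ∉ S, 0 < q i) : 0 < productWeight p q S :=
  prod_pos fun i _ => by split_ifs with h; exacts [hp i h, hq i h]

lemma sum_productWeight_card_eq_pos [IsStrictOrderedRing R] {n l : ℕ} {p q : Fin n → R}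
    (hl : l ≤ n) (hp : ∀ i, 0 < p i) (hq : 0 ≤ q) (hq_pos : ∀ i : Fin n, l ≤ i → 0 < q i) :
    0 < ∑ T with #T = l, productWeight p q T := by
  refine sum_pos' (fun T _ => productWeight_nonneg (fun i => (hp i).le) hq T)
    ⟨({i | (i : ℕ) < l} : Finset (Fin n)), ?_, productWeight_pos (fun i _ => hp i) fun i hi => hq_pos i ?_⟩
  · simp [Fin.card_filter_val_lt, hl]
  · simpa using hi

end ProductWeight

lemma card_insert_sdiff_erase {α : Type*} [DecidableEq α] {S T : Finset α} {x : α}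
    (hxT : x ∈ T) (hST : #T = #S + 1) : #(insert x S \ T.erase x) = #(T \ S) := by
  have hset : insert x S \ T.erase x = insert x (S \ T) := by
    ext y
    by_cases hy : y = x <;> simp [hy]
  have hTS := card_sdiff_add_card_inter T S
  have hST' := card_sdiff_add_card_inter S T
  rw [inter_comm] at hST'
  rw [hset, card_insert_of_notMem (by simp [hxT])]
  omega

lemma sum_eq_sum_sigma_div_card {ι κ 𝕜 : Type*} [Field 𝕜] [CharZero 𝕜] {s : Finset ι}
    {t : ι → Finset κ} (ht : ∀ i ∈ s, (t i).Nonempty) (f : ι → 𝕜) :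
    ∑ i ∈ s, f i = ∑ j ∈ s.sigma t, f j.1 / #(t j.1) := by
  rw [sum_sigma]
  refine sum_congr rfl fun i hi => ?_
  have := (ht i hi).card_pos.ne'
  simp only [sum_const, nsmul_eq_mul]
  field_simp

section Levels

variable {α 𝕜 : Type*} [Fintype α] [DecidableEq α]
  [Field 𝕜] [LinearOrder 𝕜] [IsStrictOrderedRing 𝕜] {p q : α → 𝕜}

lemma sum_mul_sum_card_eq_le_of_isUpperSet (hp : 0 ≤ p) (hq : 0 ≤ q) {𝒰 : Finset (Finset α)}
    (h𝒰 : IsUpperSet (𝒰 : Set (Finset α))) (k : ℕ) :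
    (∑ S ∈ 𝒰 with #S = k, productWeight p q S) * ∑ T with #T = k + 1, productWeight p q T ≤
      (∑ T ∈ 𝒰 with #T = k + 1, productWeight p q T) *
        ∑ S with #S = k, productWeight p q S := by
  let g : (Σ _ : Finset α × Finset α, α) → 𝕜 := fun j =>
    productWeight p q j.1.1 * productWeight p q j.1.2 / #(j.1.2 \ j.1.1)
  have triples (𝒜 ℬ : Finset (Finset α)) (h𝒜 : ∀ S ∈ 𝒜, #S = k) (hℬ : ∀ T ∈ ℬ, #T = k + 1) :
      (∑ S ∈ 𝒜, productWeight p q S) * ∑ T ∈ ℬ, productWeight p q T =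
        ∑ j ∈ (𝒜 ×ˢ ℬ).sigma (fun st => st.2 \ st.1), g j := by
    rw [sum_mul_sum, ← sum_product', sum_eq_sum_sigma_div_card]
    simp only [mem_product, sdiff_nonempty, and_imp, Prod.forall]
    intro S T hS hT hST
    have := card_le_card hST
    rw [h𝒜 S hS, hℬ T hT] at this
    omega
  let exchange : (Σ _ : Finset α × Finset α, α) → (Σ _ : Finset α × Finset α, α) :=
    fun j => ⟨(j.1.2.erase j.2, insert j.2 j.1.1), j.2⟩
  rw [mul_comm _ (∑ S with #S = k, productWeight p q S), triples _ _ (by simp) (by simp),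
    triples _ _ (by simp) (by simp)]
  set dom := ((𝒰.filter (#· = k)) ×ˢ univ.filter (#· = k + 1)).sigma (fun st => st.2 \ st.1)
  calc ∑ j ∈ dom, g j = ∑ j ∈ dom, g (exchange j) := by
        refine sum_congr rfl fun ⟨⟨S, T⟩, x⟩ hj => ?_
        simp only [dom, mem_sigma, mem_product, mem_filter, mem_univ, true_and, mem_sdiff] at hj
        obtain ⟨⟨⟨-, hS⟩, hT⟩, hxT, hxS⟩ := hj
        simp only [g, exchange]
        rw [card_insert_sdiff_erase hxT (by omega), mul_comm (productWeight p q (T.erase x)),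
          ← productWeight_mul_productWeight_insert_erase hxS hxT]
    _ = ∑ j ∈ dom.image exchange, g j := by
        refine (sum_image fun ⟨⟨S, T⟩, x⟩ hj ⟨⟨S', T'⟩, x'⟩ hj' he => ?_).symm
        simp only [dom, mem_coe, mem_sigma, mem_sdiff] at hj hj'
        simp only [exchange, Sigma.mk.injEq, Prod.mk.injEq, heq_eq_eq] at he
        obtain ⟨⟨hT, hS⟩, rfl⟩ := he
        rw [← erase_insert hj.2.2, hS, erase_insert hj'.2.2, ← insert_erase hj.2.1, hT,
          insert_erase hj'.2.1]
    _ ≤ _ := by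
        refine sum_le_sum_of_subset_of_nonneg ?_ fun j _ _ => ?_
        · simp only [dom, subset_iff, mem_image, exchange]
          rintro _ ⟨⟨⟨S, T⟩, x⟩, hj, rfl⟩
          simp only [mem_sigma, mem_product, mem_filter, mem_univ, true_and, mem_sdiff] at hj ⊢
          obtain ⟨⟨⟨hS𝒰, hS⟩, hT⟩, hxT, hxS⟩ := hj
          refine ⟨⟨?_, ⟨h𝒰 (subset_insert x S) hS𝒰, ?_⟩⟩, mem_insert_self x S, notMem_erase x T⟩
          · rw [card_erase_of_mem hxT, hT, Nat.add_sub_cancel]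
          · rw [card_insert_of_notMem hxS, hS]
        · exact div_nonneg (mul_nonneg (productWeight_nonneg hp hq _)
            (productWeight_nonneg hp hq _)) (Nat.cast_nonneg _)

lemma sum_div_sum_card_eq_le_of_isUpperSet (hp : 0 ≤ p) (hq : 0 ≤ q) {𝒰 : Finset (Finset α)}
    (h𝒰 : IsUpperSet (𝒰 : Set (Finset α))) {k : ℕ}
    (hpos : 0 < ∑ T with #T = k + 1, productWeight p q T) :
    (∑ S ∈ 𝒰 with #S = k, productWeight p q S) / ∑ S with #S = k, productWeight p q S ≤
      (∑ T ∈ 𝒰 with #T = k + 1, productWeight p q T) /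
        ∑ T with #T = k + 1, productWeight p q T := by
  have hw := productWeight_nonneg hp hq
  obtain hzero | hlevel := (sum_nonneg fun S _ => hw S :
    0 ≤ ∑ S with #S = k, productWeight p q S).eq_or_lt
  · rw [← hzero, div_zero]
    exact div_nonneg (sum_nonneg fun T _ => hw T) hpos.le
  · rw [div_le_div_iff₀ hlevel hpos]
    exact sum_mul_sum_card_eq_le_of_isUpperSet hp hq h𝒰 k

end Levels

def boolFunEquivFinset (α : Type*) [Fintype α] [DecidableEq α] : (α → Bool) ≃ Finset α where
  toFun b := {i | b i}
  invFun S i := decide (i ∈ S)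
  left_inv b := by ext i; simp
  right_inv S := by ext i; simp

lemma productWeight_boolFunEquivFinset {α R : Type*} [Fintype α] [DecidableEq α] [CommMonoid R]
    (p q : α → R) (b : α → Bool) :
    productWeight p q (boolFunEquivFinset α b) = ∏ i, if b i then p i else q i := by
  simp [productWeight, boolFunEquivFinset]

theorem union_upset_conditional_monotone_general (n m k : ℕ) (hk1 : 1 ≤ k) (hkn : k ≤ n - 1)
    (A : Fin m → Finset (Fin n))
    (W : (Fin n → Bool) → ℝ)
    (hW : ∀ b, W b = ∏ i : Fin n,
      (if b i then (1 : ℝ) / (i + 1) else 1 - 1 / (i + 1)))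
    (Z : ℕ → ℝ)
    (hZ : ∀ l, Z l = ∑ b ∈ Finset.univ.filter
      (fun b : Fin n → Bool => (Finset.univ.filter (fun i => b i = true)).card = l), W b)
    (U : ℕ → ℝ)
    (hU : ∀ l, U l = ∑ b ∈ Finset.univ.filter
      (fun b : Fin n → Bool =>
        (Finset.univ.filter (fun i => b i = true)).card = l ∧
        ∃ j : Fin m, ∀ i ∈ A j, b i = true), W b) :
    U k / Z k ≤ U (k + 1) / Z (k + 1) := by
  set p : Fin n → ℝ := fun i => 1 / (i + 1)
  set q : Fin n → ℝ := fun i => i / (i + 1)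
  have hW_eq : ∀ b, W b = productWeight p q (boolFunEquivFinset _ b) := fun b => by
    rw [hW, productWeight_boolFunEquivFinset]
    refine prod_congr rfl fun i _ => if_congr Iff.rfl rfl ?_
    simp only [q]
    field_simp
    ring
  set 𝒰 : Finset (Finset (Fin n)) := {S | ∃ j, A j ⊆ S}
  have h𝒰 : IsUpperSet (𝒰 : Set (Finset (Fin n))) := fun S T hST hS => by
    obtain ⟨j, hj⟩ := (mem_filter.1 hS).2
    exact mem_filter.2 ⟨mem_univ T, j, hj.trans hST⟩
  have hZ' : ∀ l, Z l = ∑ S with #S = l, productWeight p q S := fun l => by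
    rw [hZ]
    exact sum_equiv (boolFunEquivFinset _) (by simp [boolFunEquivFinset]) fun b _ => hW_eq b
  have hU' : ∀ l, U l = ∑ S ∈ 𝒰 with #S = l, productWeight p q S := fun l => by
    rw [hU]
    exact sum_equiv (boolFunEquivFinset _) (by simp [boolFunEquivFinset, 𝒰, subset_iff, and_comm])
      fun b _ => hW_eq b
  -- `q 0 = 0` (`B_1 = 1` surely), so only the levels `l ≥ 1` carry positive weight
  have hpos := sum_productWeight_card_eq_pos (p := p) (q := q) (l := k + 1) (by omega)
    (fun i => by positivity) (fun i => by positivity) fun i hi =>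
      div_pos (by exact_mod_cast (by omega : 0 < (i : ℕ))) (by positivity)
  rw [hZ', hZ', hU', hU']
  exact sum_div_sum_card_eq_le_of_isUpperSet (fun i => by positivity) (fun i => by positivity) h𝒰
    hpos

/-- For independent Bernoullis `B_i` with mean `1/i` (`i = 1,…,n`), the
conditional probability of a union of events `E_j = {B_i = 1 ∀ i ∈ A_j}`,
where the `A_j` are distinct `k`-subsets, given `∑ B_i = k`, is at most the
same conditional probability given `∑ B_i = k + 1`. -/
theorem union_upset_conditional_monotone (n m k : ℕ) (hk1 : 1 ≤ k) (hkn : k ≤ n - 1)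
    (A : Fin m → Finset (Fin n)) (hA : Function.Injective A)
    (hAcard : ∀ j, (A j).card = k)
    (W : (Fin n → Bool) → ℝ)
    (hW : ∀ b, W b = ∏ i : Fin n,
      (if b i then (1 : ℝ) / (i + 1) else 1 - 1 / (i + 1)))
    (Z : ℕ → ℝ)
    (hZ : ∀ l, Z l = ∑ b ∈ Finset.univ.filter
      (fun b : Fin n → Bool => (Finset.univ.filter (fun i => b i = true)).card = l), W b)
    (U : ℕ → ℝ)
    (hU : ∀ l, U l = ∑ b ∈ Finset.univ.filter
      (fun b : Fin n → Bool =>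
        (Finset.univ.filter (fun i => b i = true)).card = l ∧
        ∃ j : Fin m, ∀ i ∈ A j, b i = true), W b) :
    U k / Z k ≤ U (k + 1) / Z (k + 1) :=
  union_upset_conditional_monotone_general n m k hk1 hkn A W hW Z hZ U hU
end

section
/- Let $B_1,\dots,B_n$ be independent Bernoulli random variables with $\Pr[B_i=1]=1/i$. For each $1 \le k \le n$ let $\mu_k$ be the law of $(B_1,\dots,B_n)$ conditioned on $\sum_{i=1}^n B_i = k$. Then there exists a coupling of random vectors $B^1,\dots,B^n$ in $\{0,1\}^n$ such that $B^k$ has law $\mu_k$ for each $k$, and almost surely $B^{k+1}$ dominates $B^k$ coordinatewise for every $1 \le k \le n-1$. -/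
/-!
Split off the first coordinate. Write `Z l` for the probability that `∑ Bᵢ = l` and `Z'` for
the same quantity for the remaining coordinates. Given level `k`, the first bit is `0` with
probability `λₖ = (1 - p₀) Z' k / Z k`, and given the first bit the remaining ones follow the
conditional law at level `k` or `k - 1`. Since `Z'` is log-concave (this follows by induction
from `Z (l + 1) = (1 - p₀) Z' (l + 1) + p₀ Z' l`), `λ` decreases from `λ₀ = 1` to `0`. So
one can draw a threshold `T` with `P(T ≥ k) = λₖ`, switch the first bit on at the levels above
`T`, and run a monotone coupling of the remaining coordinates that pauses for one step at `T`.
When `p₀ = 1`, as for `pᵢ = 1/i`, the first bit is always on, and prepending it to a coupling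
of the remaining coordinates is enough.
-/

open Finset

namespace BernoulliCoupling

section Weights

variable {m : ℕ}

def countOnes (b : Fin m → Bool) : ℕ := #{i | b i = true}

def weight (p : Fin m → ℝ) (b : Fin m → Bool) : ℝ := ∏ i, if b i then p i else 1 - p i

def levelMass (p : Fin m → ℝ) (l : ℕ) : ℝ := ∑ b with countOnes b = l, weight p b

noncomputable def condLaw (p : Fin m → ℝ) (l : ℕ) (b : Fin m → Bool) : ℝ :=
  if countOnes b = l then weight p b / levelMass p l else 0

lemma countOnes_le (b : Fin m → Bool) : countOnes b ≤ m :=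
  (card_filter_le _ _).trans_eq (card_fin m)

lemma exists_countOnes_eq {l : ℕ} (hl : l ≤ m) : ∃ b : Fin m → Bool, countOnes b = l :=
  ⟨fun i => decide ((i : ℕ) < l), by simpa [countOnes, Fin.card_filter_val_lt] using hl⟩

@[simp]
lemma countOnes_cons (ε : Bool) (b : Fin m → Bool) :
    countOnes (Fin.cons ε b : Fin (m + 1) → Bool) = countOnes b + ε.toNat := by
  simp only [countOnes, card_filter, Fin.sum_univ_succ, Fin.cons_zero, Fin.cons_succ]
  cases ε <;> simp [add_comm]

@[simp]
lemma weight_cons (p : Fin (m + 1) → ℝ) (ε : Bool) (b : Fin m → Bool) :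
    weight p (Fin.cons ε b) = (if ε then p 0 else 1 - p 0) * weight (Fin.tail p) b := by
  simp [weight, Fin.prod_univ_succ, Fin.tail]

lemma sum_fun_fin_succ {β M : Type*} [Fintype β] [AddCommMonoid M]
    (f : (Fin (m + 1) → β) → M) : ∑ b, f b = ∑ ε, ∑ b : Fin m → β, f (Fin.cons ε b) := by
  rw [← (Fin.consEquiv fun _ => β).sum_comp, Fintype.sum_prod_type]
  rfl

lemma weight_nonneg {p : Fin m → ℝ} (h0 : ∀ i, 0 ≤ p i) (h1 : ∀ i, p i ≤ 1)
    (b : Fin m → Bool) : 0 ≤ weight p b :=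
  prod_nonneg fun i _ => by split <;> linarith [h0 i, h1 i]

lemma weight_pos {p : Fin m → ℝ} (h0 : ∀ i, 0 < p i) (h1 : ∀ i, p i < 1) (b : Fin m → Bool) :
    0 < weight p b :=
  prod_pos fun i _ => by split <;> linarith [h0 i, h1 i]

lemma levelMass_nonneg {p : Fin m → ℝ} (h0 : ∀ i, 0 ≤ p i) (h1 : ∀ i, p i ≤ 1) (l : ℕ) :
    0 ≤ levelMass p l :=
  sum_nonneg fun b _ => weight_nonneg h0 h1 b

lemma levelMass_pos {p : Fin m → ℝ} (h0 : ∀ i, 0 < p i) (h1 : ∀ i, p i < 1) {l : ℕ}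
    (hl : l ≤ m) : 0 < levelMass p l := by
  obtain ⟨b, hb⟩ := exists_countOnes_eq hl
  exact sum_pos' (fun b _ => (weight_pos h0 h1 b).le) ⟨b, by simpa using hb, weight_pos h0 h1 b⟩

lemma levelMass_eq_zero {p : Fin m → ℝ} {l : ℕ} (hl : m < l) : levelMass p l = 0 :=
  sum_eq_zero fun b hb => absurd (mem_filter.mp hb).2 (by have := countOnes_le b; omega)

lemma levelMass_cons_zero (p : Fin (m + 1) → ℝ) :
    levelMass p 0 = (1 - p 0) * levelMass (Fin.tail p) 0 := by
  simp [levelMass, sum_filter, sum_fun_fin_succ, mul_sum]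

lemma levelMass_cons_succ (p : Fin (m + 1) → ℝ) (l : ℕ) :
    levelMass p (l + 1) =
      (1 - p 0) * levelMass (Fin.tail p) (l + 1) + p 0 * levelMass (Fin.tail p) l := by
  simp [levelMass, sum_filter, sum_fun_fin_succ, mul_sum, add_comm]

/-- Log-concavity of the level masses, in the strong form that survives the induction. -/
lemma levelMass_mul_le : ∀ {m : ℕ} {p : Fin m → ℝ}, (∀ i, 0 ≤ p i) → (∀ i, p i ≤ 1) →
    ∀ {k l : ℕ}, k ≤ l → levelMass p k * levelMass p (l + 1) ≤ levelMass p (k + 1) * levelMass p l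
  | 0, p, h0, h1, k, l, _ => by
    rw [levelMass_eq_zero (Nat.succ_pos l), mul_zero]
    exact mul_nonneg (levelMass_nonneg h0 h1 _) (levelMass_nonneg h0 h1 _)
  | m + 1, p, h0, h1, k, l, hkl => by
    set x := levelMass (Fin.tail p)
    have hx : ∀ j, 0 ≤ x j := levelMass_nonneg (fun i => h0 _) (fun i => h1 _)
    have ih : ∀ {k l : ℕ}, k ≤ l → x k * x (l + 1) ≤ x (k + 1) * x l :=
      levelMass_mul_le (fun i => h0 _) (fun i => h1 _)
    have ha : 0 ≤ 1 - p 0 := by linarith [h1 0]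
    have hc : 0 ≤ p 0 := h0 0
    match k, l, hkl with
    | 0, 0, _ => exact (mul_comm _ _).le
    | 0, l + 1, _ =>
      rw [levelMass_cons_zero, levelMass_cons_succ, levelMass_cons_succ, levelMass_cons_succ]
      nlinarith [mul_le_mul_of_nonneg_left (ih (Nat.zero_le (l + 1))) (mul_nonneg ha ha),
        mul_nonneg (mul_nonneg ha hc) (mul_nonneg (hx 1) (hx l)),
        mul_nonneg (mul_nonneg hc hc) (mul_nonneg (hx 0) (hx l))]
    | k + 1, l + 1, hkl =>
      have hkl : k ≤ l := by omega
      have outer : x k * x (l + 2) ≤ x (k + 2) * x l := by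
        rcases hkl.eq_or_lt with rfl | hlt
        · exact (mul_comm _ _).le
        · exact (ih (by omega : k ≤ l + 1)).trans (ih (by omega : k + 1 ≤ l))
      rw [levelMass_cons_succ, levelMass_cons_succ, levelMass_cons_succ, levelMass_cons_succ]
      nlinarith [mul_le_mul_of_nonneg_left (ih (by omega : k + 1 ≤ l + 1)) (mul_nonneg ha ha),
        mul_le_mul_of_nonneg_left (ih hkl) (mul_nonneg hc hc),
        mul_le_mul_of_nonneg_left outer (mul_nonneg ha hc)]

end Weights

section HeadFalseProb

variable {m : ℕ} {p : Fin (m + 1) → ℝ}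

/-- The conditional probability, given level `l`, that the first bit is `0` (the `λₗ` above). -/
noncomputable def headFalseProb (p : Fin (m + 1) → ℝ) (l : ℕ) : ℝ :=
  (1 - p 0) * levelMass (Fin.tail p) l / levelMass p l

lemma headFalseProb_top : headFalseProb p (m + 1) = 0 := by
  rw [headFalseProb, levelMass_eq_zero (Nat.lt_succ_self m), mul_zero, zero_div]

variable (h0 : ∀ i, 0 < p i) (h1 : ∀ i, p i < 1)
include h0 h1

lemma levelMass_tail_pos {l : ℕ} (hl : l ≤ m) : 0 < levelMass (Fin.tail p) l :=
  levelMass_pos (fun i => h0 i.succ) (fun i => h1 i.succ) hl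

lemma headFalseProb_zero : headFalseProb p 0 = 1 := by
  rw [headFalseProb, ← levelMass_cons_zero, div_self (levelMass_pos h0 h1 (Nat.zero_le _)).ne']

lemma headFalseProb_succ_le {k : ℕ} (hk : k ≤ m) :
    headFalseProb p (k + 1) ≤ headFalseProb p k := by
  have hx : ∀ j, 0 ≤ levelMass (Fin.tail p) j :=
    levelMass_nonneg (fun i => (h0 i.succ).le) (fun i => (h1 i.succ).le)
  have ha : 0 ≤ 1 - p 0 := by linarith [h1 0]
  have hc : 0 ≤ p 0 := (h0 0).le
  rw [headFalseProb, headFalseProb, div_le_div_iff₀ (levelMass_pos h0 h1 (by omega))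
    (levelMass_pos h0 h1 (by omega)), levelMass_cons_succ]
  cases k with
  | zero =>
    rw [levelMass_cons_zero]
    nlinarith [mul_nonneg (mul_nonneg ha hc) (mul_nonneg (hx 0) (hx 0))]
  | succ j =>
    have lc := levelMass_mul_le (p := Fin.tail p) (fun i => (h0 i.succ).le)
      (fun i => (h1 i.succ).le) (Nat.le_succ j)
    rw [levelMass_cons_succ]
    nlinarith [mul_le_mul_of_nonneg_left lc (mul_nonneg ha hc)]

lemma condLaw_cons_false (k : ℕ) (b : Fin m → Bool) :
    condLaw p k (Fin.cons false b) = headFalseProb p k * condLaw (Fin.tail p) k b := by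
  unfold condLaw headFalseProb
  simp only [countOnes_cons, Bool.toNat_false, add_zero, weight_cons, Bool.false_eq_true,
    if_false]
  split_ifs with hb
  · have := (levelMass_tail_pos h0 h1 (hb ▸ countOnes_le b)).ne'
    field_simp
  · rw [mul_zero]

lemma condLaw_cons_true (k : ℕ) (b : Fin m → Bool) :
    condLaw p k (Fin.cons true b) = (1 - headFalseProb p k) * condLaw (Fin.tail p) (k - 1) b := by
  cases k with
  | zero => simp [condLaw, headFalseProb_zero h0 h1]
  | succ k =>
    unfold condLaw
    simp only [countOnes_cons, Bool.toNat_true, add_left_inj, weight_cons, if_true,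
      Nat.add_sub_cancel]
    split_ifs with hb
    · have hZ := (levelMass_pos h0 h1 (by have := countOnes_le b; omega : k + 1 ≤ m + 1)).ne'
      have hx := (levelMass_tail_pos h0 h1 (hb ▸ countOnes_le b)).ne'
      rw [levelMass_cons_succ] at hZ
      rw [headFalseProb, levelMass_cons_succ]
      field_simp
      ring
    · rw [mul_zero]

end HeadFalseProb

section Threshold

variable {m : ℕ} {p : Fin (m + 1) → ℝ}

noncomputable def thresholdWeight (p : Fin (m + 1) → ℝ) (t : Fin (m + 1)) : ℝ :=
  headFalseProb p t - headFalseProb p ((t : ℕ) + 1)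

lemma sum_thresholdWeight_of_le {k : ℕ} (hk : k ≤ m + 1) :
    ∑ t with k ≤ t.val, thresholdWeight p t = headFalseProb p k := by
  unfold thresholdWeight
  rw [sum_filter, Fin.sum_univ_eq_sum_range
      (fun t => if k ≤ t then headFalseProb p t - headFalseProb p (t + 1) else 0),
    ← sum_filter, range_eq_Ico, Ico_filter_le, max_eq_right (Nat.zero_le k), ← neg_inj,
    ← sum_neg_distrib]
  simp only [neg_sub]
  rw [sum_Ico_sub _ hk, headFalseProb_top, zero_sub]

variable (h0 : ∀ i, 0 < p i) (h1 : ∀ i, p i < 1)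
include h0 h1

lemma thresholdWeight_nonneg (t : Fin (m + 1)) : 0 ≤ thresholdWeight p t :=
  sub_nonneg.mpr (headFalseProb_succ_le h0 h1 t.is_le)

lemma sum_thresholdWeight_of_lt {k : ℕ} (hk : k ≤ m + 1) :
    ∑ t with t.val < k, thresholdWeight p t = 1 - headFalseProb p k := by
  unfold thresholdWeight
  rw [sum_filter, Fin.sum_univ_eq_sum_range
      (fun t => if t < k then headFalseProb p t - headFalseProb p (t + 1) else 0),
    ← sum_filter, range_eq_Ico, Ico_filter_lt, min_eq_right hk, ← range_eq_Ico, sum_range_sub',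
    headFalseProb_zero h0 h1]

lemma sum_thresholdWeight : ∑ t, thresholdWeight p t = 1 := by
  have h := sum_thresholdWeight_of_lt h0 h1 (le_refl (m + 1))
  rwa [filter_true_of_mem fun t _ => t.is_lt, headFalseProb_top, sub_zero] at h

lemma condLaw_cons_eq_sum_thresholdWeight (k : Fin (m + 2)) (ε : Bool) (b : Fin m → Bool) :
    condLaw p k (Fin.cons ε b) = ∑ t, if decide (t.castSucc < k) = ε then
      thresholdWeight p t * condLaw (Fin.tail p) (t.predAbove k) b else 0 := by
  cases ε
  · rw [condLaw_cons_false h0 h1, ← sum_thresholdWeight_of_le (by omega), sum_mul, sum_filter]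
    refine sum_congr rfl fun t _ => ?_
    by_cases h : (k : ℕ) ≤ t
    · simp [h, Fin.lt_def, Fin.predAbove_of_le_castSucc t k (Fin.le_def.mpr h)]
    · simp [h, Fin.lt_def, show (t : ℕ) < k by omega]
  · rw [condLaw_cons_true h0 h1, ← sum_thresholdWeight_of_lt h0 h1 (by omega), sum_mul,
      sum_filter]
    refine sum_congr rfl fun t _ => ?_
    by_cases h : (t : ℕ) < k
    · simp [h, Fin.lt_def, Fin.predAbove_of_castSucc_lt t k (Fin.lt_def.mpr h)]
    · simp [h, Fin.lt_def]

end Threshold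

section Coupling

variable {N : ℕ} {α : Type*} [Fintype α] [DecidableEq α] [Preorder α]

structure IsMonotoneCoupling (law : Fin N → α → ℝ) (μ : (Fin N → α) → ℝ) : Prop where
  nonneg : ∀ ω, 0 ≤ μ ω
  sum_eq_one : ∑ ω, μ ω = 1
  marginal : ∀ k a, ∑ ω with ω k = a, μ ω = law k a
  monotone_of_pos : ∀ ω, 0 < μ ω → Monotone ω

def pushforward {β γ : Type*} [Fintype β] [DecidableEq γ] (f : β → ℝ) (G : β → γ) (c : γ) : ℝ :=
  ∑ x with G x = c, f x

lemma isMonotoneCoupling_pushforward {β : Type*} [Fintype β] {law : Fin N → α → ℝ} {f : β → ℝ}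
    {G : β → Fin N → α} (hf : ∀ x, 0 ≤ f x) (hsum : ∑ x, f x = 1)
    (hmarg : ∀ k a, ∑ x with G x k = a, f x = law k a) (hmono : ∀ x, 0 < f x → Monotone (G x)) :
    IsMonotoneCoupling law (pushforward f G) where
  nonneg ω := sum_nonneg fun x _ => hf x
  sum_eq_one := by rw [← hsum, ← sum_fiberwise univ G f]; rfl
  marginal k a := by
    unfold pushforward
    rw [← hmarg k a, sum_fiberwise_eq_sum_filter]
    simp only [mem_filter, mem_univ, true_and]
  monotone_of_pos ω hω := by
    obtain ⟨x, hx, hfx⟩ := exists_lt_of_sum_lt (sum_const_zero.trans_lt hω)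
    obtain ⟨-, rfl⟩ := mem_filter.mp hx
    exact hmono x hfx

end Coupling

section ExtendPath

variable {N m : ℕ}

/-- `t.predAbove k` is `k` for `k ≤ t` and `k - 1` for `k > t`: the new path pauses `ω` for one
step at the threshold `t`, where its first bit switches on. -/
def extendPath (ω : Fin (N + 1) → Fin m → Bool) (t : Fin (N + 1)) :
    Fin (N + 2) → Fin (m + 1) → Bool :=
  fun k => Fin.cons (decide (t.castSucc < k)) (ω (t.predAbove k))

lemma monotone_extendPath {ω : Fin (N + 1) → Fin m → Bool} (hω : Monotone ω)
    (t : Fin (N + 1)) : Monotone (extendPath ω t) := fun k l hkl =>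
  Fin.cons_le_cons.mpr
    ⟨Bool.le_iff_imp.mpr (by simpa using fun h => h.trans_le hkl),
      hω (Fin.predAbove_right_monotone t hkl)⟩

lemma sum_extendPath_eq_cons (ν : (Fin (N + 1) → Fin m → Bool) → ℝ) (w : Fin (N + 1) → ℝ)
    (k : Fin (N + 2)) (ε : Bool) (b : Fin m → Bool) :
    ∑ x : (Fin (N + 1) → Fin m → Bool) × Fin (N + 1) with extendPath x.1 x.2 k = Fin.cons ε b,
      ν x.1 * w x.2 =
      ∑ t, if decide (t.castSucc < k) = ε then w t * ∑ ω with ω (t.predAbove k) = b, ν ω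
        else 0 := by
  simp only [extendPath, Fin.cons_inj, sum_filter, Fintype.sum_prod_type]
  rw [sum_comm]
  refine sum_congr rfl fun t _ => ?_
  split_ifs <;> simp [*, mul_sum, mul_comm]

end ExtendPath

section Construction

variable {m : ℕ} {p : Fin (m + 1) → ℝ}

theorem IsMonotoneCoupling.extend (h0 : ∀ i, 0 < p i) (h1 : ∀ i, p i < 1)
    {ν : (Fin (m + 1) → Fin m → Bool) → ℝ}
    (hν : IsMonotoneCoupling (fun k : Fin (m + 1) => condLaw (Fin.tail p) k) ν) :
    IsMonotoneCoupling (fun k : Fin (m + 2) => condLaw p k)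
      (pushforward (fun x : (Fin (m + 1) → Fin m → Bool) × Fin (m + 1) =>
        ν x.1 * thresholdWeight p x.2) fun x => extendPath x.1 x.2) := by
  refine isMonotoneCoupling_pushforward
    (fun x => mul_nonneg (hν.nonneg _) (thresholdWeight_nonneg h0 h1 _)) ?_ ?_ ?_
  · rw [Fintype.sum_prod_type]
    dsimp only
    rw [← sum_mul_sum, hν.sum_eq_one, sum_thresholdWeight h0 h1, one_mul]
  · intro k b
    induction b using Fin.consCases with | _ ε b => ?_
    simp only [sum_extendPath_eq_cons, hν.marginal, condLaw_cons_eq_sum_thresholdWeight h0 h1]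
  · rintro ⟨ω, t⟩ hpos
    exact monotone_extendPath
      (hν.monotone_of_pos ω (pos_of_mul_pos_left hpos (thresholdWeight_nonneg h0 h1 t))) t

theorem IsMonotoneCoupling.prependTrue (hp : p 0 = 1) {ν : (Fin (m + 1) → Fin m → Bool) → ℝ}
    (hν : IsMonotoneCoupling (fun k : Fin (m + 1) => condLaw (Fin.tail p) k) ν) :
    IsMonotoneCoupling (fun k : Fin (m + 1) => condLaw p (k + 1))
      (pushforward ν fun ω k => Fin.cons true (ω k)) := by
  refine isMonotoneCoupling_pushforward hν.nonneg hν.sum_eq_one (fun k b => ?_)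
    fun ω hω k l hkl => Fin.cons_le_cons.mpr ⟨le_rfl, hν.monotone_of_pos ω hω hkl⟩
  induction b using Fin.consCases with | _ ε b => ?_
  cases ε <;> simp [Fin.cons_inj, hν.marginal, condLaw, levelMass_cons_succ, hp]

end Construction

theorem exists_isMonotoneCoupling_condLaw : ∀ {m : ℕ} {p : Fin m → ℝ}, (∀ i, 0 < p i) →
    (∀ i, p i < 1) → ∃ μ, IsMonotoneCoupling (fun k : Fin (m + 1) => condLaw p k) μ
  | 0, p, _, _ => ⟨fun _ => 1,
      { nonneg := fun _ => zero_le_one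
        sum_eq_one := by simp
        marginal := fun k b => by
          simp [Subsingleton.elim _ b, condLaw, levelMass, weight, countOnes]
        monotone_of_pos := fun ω _ => Subsingleton.monotone' ω }⟩
  | _ + 1, p, h0, h1 => by
    obtain ⟨ν, hν⟩ := exists_isMonotoneCoupling_condLaw (p := Fin.tail p)
      (fun i => h0 i.succ) (fun i => h1 i.succ)
    exact ⟨_, hν.extend h0 h1⟩

end BernoulliCoupling

open BernoulliCoupling

/-- Existence of a monotone coupling of the laws of `(B_1,…,B_n)` (independent
Bernoulli with means `1/i`) conditioned on `∑ B_i = k`, for `k = 1,…,n`: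
there is a joint law `μ` on sequences `(B^1,…,B^n)` (indexed by `Fin n`, with
`ω ⟨k-1⟩` playing the role of `B^k`) whose `k`-th marginal is the conditional
law given sum `k`, and which is almost surely coordinatewise increasing in `k`. -/
theorem exists_monotone_coupling_bernoulli_conditioned (n : ℕ)
    (W : (Fin n → Bool) → ℝ)
    (hW : ∀ b, W b = ∏ i : Fin n,
      (if b i then (1 : ℝ) / (i + 1) else 1 - 1 / (i + 1)))
    (Z : ℕ → ℝ)
    (hZ : ∀ l, Z l = ∑ b ∈ Finset.univ.filter
      (fun b : Fin n → Bool => (Finset.univ.filter (fun i => b i = true)).card = l), W b) :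
    ∃ μ : (Fin n → Fin n → Bool) → ℝ,
      (∀ ω, 0 ≤ μ ω) ∧ (∑ ω : Fin n → Fin n → Bool, μ ω = 1) ∧
      (∀ k : Fin n, ∀ b : Fin n → Bool,
        ∑ ω ∈ Finset.univ.filter (fun ω : Fin n → Fin n → Bool => ω k = b), μ ω =
          (if (Finset.univ.filter (fun i => b i = true)).card = (k : ℕ) + 1
            then W b / Z ((k : ℕ) + 1) else 0)) ∧
      (∀ ω : Fin n → Fin n → Bool, 0 < μ ω →
        ∀ k l : Fin n, (l : ℕ) = (k : ℕ) + 1 →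
          ∀ i : Fin n, ω k i = true → ω l i = true) := by
  set p : Fin n → ℝ := fun i => 1 / ((i : ℝ) + 1)
  obtain rfl : W = weight p := funext hW
  obtain rfl : Z = levelMass p := funext hZ
  obtain ⟨μ, hμ⟩ : ∃ μ, IsMonotoneCoupling (fun k : Fin n => condLaw p (k + 1)) μ := by
    cases n with
    | zero => exact ⟨fun _ => 1, fun _ => zero_le_one, by simp, fun k => k.elim0,
        fun ω _ => Subsingleton.monotone' ω⟩
    | succ m =>
      have hp : ∀ i : Fin m, 0 < Fin.tail p i ∧ Fin.tail p i < 1 := fun i => by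
        have hi : (1 : ℝ) < (i.succ : ℕ) + 1 := by
          rw [Fin.val_succ, Nat.cast_succ]
          linarith [i.val.cast_nonneg (α := ℝ)]
        exact ⟨one_div_pos.mpr (by linarith), (div_lt_one (by linarith)).mpr hi⟩
      obtain ⟨ν, hν⟩ := exists_isMonotoneCoupling_condLaw (fun i => (hp i).1) (fun i => (hp i).2)
      exact ⟨_, hν.prependTrue (by simp [p])⟩
  refine ⟨μ, hμ.nonneg, hμ.sum_eq_one, hμ.marginal, fun ω hω k l hkl i hi => ?_⟩
  exact Bool.le_iff_imp.mp (hμ.monotone_of_pos ω hω (Fin.le_def.mpr (by omega)) i) hi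
end

section
/- Let $\mu$ be a probability measure on a finite partially ordered set $S$ and $\nu$ a probability measure on a finite partially ordered set $T$, with a relation $\prec \subseteq S \times T$. There exists a coupling $(X,Y)$ with $X \sim \mu$, $Y \sim \nu$ and $X \prec Y$ almost surely, if and only if for every subset $C \subseteq S$, $\mu(C) \le \nu(N(C))$ where $N(C) = \{t \in T : s \prec t \text{ for some } s \in C\}$. -/
/-!
It suffices to find `π ≥ 0` supported on `r` with row sums `μ` and column sums at most `ν`:
when the total masses agree, the column sums are then forced to equal `ν`. This is proved by
induction on the number of pairs `(s, t)` with `r s t`, `μ s ≠ 0` and `ν t ≠ 0`. For such a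
pair, move as much mass `δ` from `μ s` and `ν t` onto `(s, t)` as the Hall condition allows.
Either `μ s` or `ν t` is used up, or some `C ∌ s` with `t ∈ N(C)` becomes tight,
`μ(C) = ν(N(C))`. In the latter case the problem splits into `(μ|C, ν|N(C))` and
`(μ|Cᶜ, ν|N(C)ᶜ)`; both satisfy the Hall condition (the second one because `C` is tight) and
neither contains the pair `(s, t)`.
-/

namespace Strassen

open Finset Function

lemma support_sub_single_subset {α M : Type*} [DecidableEq α] [AddGroup M] {f : α → M}
    {a : α} (ha : f a ≠ 0) (b : M) : support (f - Pi.single a b) ⊆ support f := fun x hx => by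
  by_cases hxa : x = a
  · exact hxa ▸ ha
  · simpa [hxa] using hx

lemma sub_single_nonneg {α : Type*} [DecidableEq α] {f : α → ℝ} (hf : 0 ≤ f) {a : α} {b : ℝ}
    (hb : b ≤ f a) : 0 ≤ f - Pi.single a b := fun x => by
  by_cases hxa : x = a
  · simpa [hxa] using hb
  · simpa [hxa] using hf x

variable {S T : Type*} [Fintype T]

section Hall

variable (r : S → T → Prop) [∀ s t, Decidable (r s t)]

def nbhd (C : Finset S) : Finset T := {t | ∃ s ∈ C, r s t}

def HallCondition (μ : S → ℝ) (ν : T → ℝ) : Prop :=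
  ∀ C : Finset S, ∑ s ∈ C, μ s ≤ ∑ t ∈ nbhd r C, ν t

variable {r} {μ : S → ℝ} {ν : T → ℝ}

@[simp]
lemma mem_nbhd {C : Finset S} {t : T} : t ∈ nbhd r C ↔ ∃ s ∈ C, r s t := by
  simp [nbhd]

lemma nbhd_mono {C D : Finset S} (h : C ⊆ D) : nbhd r C ⊆ nbhd r D := fun t ht => by
  obtain ⟨s, hs, hst⟩ := mem_nbhd.1 ht
  exact mem_nbhd.2 ⟨s, h hs, hst⟩

lemma nbhd_union [DecidableEq S] [DecidableEq T] (C D : Finset S) :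
    nbhd r (C ∪ D) = nbhd r C ∪ nbhd r D := by
  ext t
  simp only [mem_nbhd, mem_union, or_and_right, exists_or]

lemma HallCondition.exists_rel_ne_zero (h : HallCondition r μ ν) {s : S} (hs : 0 < μ s) :
    ∃ t, r s t ∧ ν t ≠ 0 := by
  have hpos : 0 < ∑ t ∈ nbhd r {s}, ν t := hs.trans_le (by simpa using h {s})
  obtain ⟨t, ht, hνt⟩ := exists_ne_zero_of_sum_ne_zero hpos.ne'
  exact ⟨t, by simpa using ht, hνt⟩

variable [DecidableEq S] [DecidableEq T]

lemma HallCondition.indicator (h : HallCondition r μ ν) (hν : 0 ≤ ν) (C₀ : Finset S) :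
    HallCondition r ((C₀ : Set S).indicator μ) ((nbhd r C₀ : Set T).indicator ν) := by
  intro C
  rw [sum_indicator_eq_sum_inter, sum_indicator_eq_sum_inter]
  exact (h _).trans (sum_le_sum_of_subset_of_nonneg
    (subset_inter (nbhd_mono inter_subset_left)
      (nbhd_mono inter_subset_right)) fun t _ _ => hν t)

lemma HallCondition.indicator_compl [Fintype S] (h : HallCondition r μ ν) {C₀ : Finset S}
    (htight : ∑ s ∈ C₀, μ s = ∑ t ∈ nbhd r C₀, ν t) :
    HallCondition r ((↑C₀ᶜ : Set S).indicator μ) ((↑(nbhd r C₀)ᶜ : Set T).indicator ν) := by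
  intro C
  rw [sum_indicator_eq_sum_inter, sum_indicator_eq_sum_inter,
    ← sdiff_eq_inter_compl, ← sdiff_eq_inter_compl, ← union_sdiff_right,
    ← union_sdiff_right (nbhd r C), sum_sdiff_eq_sub subset_union_right,
    sum_sdiff_eq_sub subset_union_right, ← nbhd_union]
  linarith [h (C ∪ C₀)]

lemma HallCondition.sub_single (h : HallCondition r μ ν) {s : S} {t : T} {δ : ℝ} (hst : r s t)
    (hδ : ∀ C, s ∉ C → t ∈ nbhd r C → ∑ x ∈ C, μ x + δ ≤ ∑ y ∈ nbhd r C, ν y) :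
    HallCondition r (μ - Pi.single s δ) (ν - Pi.single t δ) := by
  intro C
  simp only [Pi.sub_apply, sum_sub_distrib, sum_pi_single']
  by_cases hs : s ∈ C
  · have ht : t ∈ nbhd r C := mem_nbhd.2 ⟨s, hs, hst⟩
    simpa [hs, ht] using h C
  · by_cases ht : t ∈ nbhd r C
    · simpa [hs, ht, le_sub_iff_add_le] using hδ C hs ht
    · simpa [hs, ht] using h C

lemma HallCondition.exists_transfer [Fintype S] (h : HallCondition r μ ν) (hμ : 0 ≤ μ)
    (hν : 0 ≤ ν) {s : S} {t : T} (hst : r s t) :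
    ∃ δ, 0 ≤ δ ∧ δ ≤ μ s ∧ δ ≤ ν t ∧
      HallCondition r (μ - Pi.single s δ) (ν - Pi.single t δ) ∧
      (δ = μ s ∨ δ = ν t ∨ ∃ C, s ∉ C ∧ t ∈ nbhd r C ∧
        ∑ x ∈ C, (μ - Pi.single s δ : S → ℝ) x =
          ∑ y ∈ nbhd r C, (ν - Pi.single t δ : T → ℝ) y) := by
  by_cases hA : ∀ C, s ∉ C → t ∈ nbhd r C →
      ∑ x ∈ C, μ x + min (μ s) (ν t) ≤ ∑ y ∈ nbhd r C, ν y
  · refine ⟨min (μ s) (ν t), le_min (hμ s) (hν t), min_le_left _ _, min_le_right _ _,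
      h.sub_single hst hA, ?_⟩
    rcases min_choice (μ s) (ν t) with hmin | hmin <;> simp [hmin]
  push Not at hA
  obtain ⟨C, hsC, htC, hC⟩ := hA
  let slack (C : Finset S) : ℝ := ∑ y ∈ nbhd r C, ν y - ∑ x ∈ C, μ x
  obtain ⟨C₀, hC₀, hmin⟩ := exists_min_image {C | s ∉ C ∧ t ∈ nbhd r C} slack
    ⟨C, mem_filter.2 ⟨mem_univ C, hsC, htC⟩⟩
  simp only [mem_filter, mem_univ, true_and] at hC₀ hmin
  have hlt : slack C₀ < min (μ s) (ν t) := by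
    have := hmin C ⟨hsC, htC⟩
    simp only [slack] at this ⊢
    linarith
  refine ⟨slack C₀, sub_nonneg.2 (h C₀), (hlt.trans_le (min_le_left _ _)).le,
    (hlt.trans_le (min_le_right _ _)).le,
    h.sub_single hst fun C hs ht => by linarith [hmin C ⟨hs, ht⟩],
    Or.inr (Or.inr ⟨C₀, hC₀.1, hC₀.2, ?_⟩)⟩
  simp only [Pi.sub_apply, sum_sub_distrib, sum_pi_single', hC₀.1, hC₀.2, slack,
    ↓reduceIte]
  ring

end Hall

variable [Fintype S]

structure IsSubcoupling (r : S → T → Prop) (μ : S → ℝ) (ν : T → ℝ) (π : S × T → ℝ) :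
    Prop where
  nonneg : ∀ x, 0 ≤ π x
  rel_of_pos : ∀ x, 0 < π x → r x.1 x.2
  sum_row : ∀ s, ∑ t, π (s, t) = μ s
  sum_col_le : ∀ t, ∑ s, π (s, t) ≤ ν t

variable {r : S → T → Prop} {μ μ' : S → ℝ} {ν ν' : T → ℝ} {π π' : S × T → ℝ}

namespace IsSubcoupling

lemma hallCondition [∀ s t, Decidable (r s t)] (h : IsSubcoupling r μ ν π) :
    HallCondition r μ ν := by
  intro C
  have hout : ∀ s ∈ C, ∀ t ∉ nbhd r C, π (s, t) = 0 := fun s hs t ht =>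
    le_antisymm (not_lt.1 fun hpos => ht (mem_nbhd.2 ⟨s, hs, h.rel_of_pos (s, t) hpos⟩))
      (h.nonneg _)
  calc ∑ s ∈ C, μ s = ∑ s ∈ C, ∑ t ∈ nbhd r C, π (s, t) := by
        refine sum_congr rfl fun s hs => ?_
        rw [← h.sum_row, ← sum_subset (subset_univ _) fun t _ ht => hout s hs t ht]
    _ = ∑ t ∈ nbhd r C, ∑ s ∈ C, π (s, t) := sum_comm
    _ ≤ ∑ t ∈ nbhd r C, ∑ s, π (s, t) := sum_le_sum fun t _ =>
        sum_le_sum_of_subset_of_nonneg (subset_univ C) fun _ _ _ => h.nonneg _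
    _ ≤ ∑ t ∈ nbhd r C, ν t := sum_le_sum fun t _ => h.sum_col_le t

lemma sum_col_eq (h : IsSubcoupling r μ ν π) (htot : ∑ s, μ s = ∑ t, ν t) (t : T) :
    ∑ s, π (s, t) = ν t := by
  refine ((sum_eq_sum_iff_of_le fun t _ => h.sum_col_le t).1 ?_) t (mem_univ t)
  rw [sum_comm, ← htot]
  exact sum_congr rfl fun s _ => h.sum_row s

lemma add (h : IsSubcoupling r μ ν π) (h' : IsSubcoupling r μ' ν' π') :
    IsSubcoupling r (μ + μ') (ν + ν') (π + π') where
  nonneg x := add_nonneg (h.nonneg x) (h'.nonneg x)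
  rel_of_pos x hx := by
    rcases (h.nonneg x).lt_or_eq with hpos | hzero
    · exact h.rel_of_pos x hpos
    · exact h'.rel_of_pos x (by simpa [← hzero] using hx)
  sum_row s := by simp [sum_add_distrib, h.sum_row, h'.sum_row]
  sum_col_le t := by
    simpa [sum_add_distrib] using add_le_add (h.sum_col_le t) (h'.sum_col_le t)

end IsSubcoupling

lemma isSubcoupling_zero (hν : 0 ≤ ν) : IsSubcoupling r 0 ν 0 where
  nonneg _ := le_rfl
  rel_of_pos _ h := absurd h (lt_irrefl 0)
  sum_row _ := by simp
  sum_col_le t := by simpa using hν t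

lemma isSubcoupling_single [DecidableEq S] [DecidableEq T] {s : S} {t : T} {δ : ℝ}
    (hst : r s t) (hδ : 0 ≤ δ) :
    IsSubcoupling r (Pi.single s δ) (Pi.single t δ) (Pi.single (s, t) δ) where
  nonneg x := by by_cases hx : x = (s, t) <;> simp [hx, hδ]
  rel_of_pos x hx := by
    by_cases hxst : x = (s, t)
    · exact hxst ▸ hst
    · simp [hxst] at hx
  sum_row s' := by by_cases h : s' = s <;> simp [Pi.single_apply, Prod.ext_iff, h]
  sum_col_le t' := by by_cases h : t' = t <;> simp [Pi.single_apply, Prod.ext_iff, h]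

def activePairs (r : S → T → Prop) (μ : S → ℝ) (ν : T → ℝ) : Set (S × T) :=
  {x | r x.1 x.2 ∧ μ x.1 ≠ 0 ∧ ν x.2 ≠ 0}

lemma ncard_activePairs_lt (hμ : support μ' ⊆ support μ) (hν : support ν' ⊆ support ν)
    {s : S} {t : T} (hst : (s, t) ∈ activePairs r μ ν) (hzero : μ' s = 0 ∨ ν' t = 0) :
    (activePairs r μ' ν').ncard < (activePairs r μ ν).ncard := by
  refine Set.ncard_lt_ncard ((Set.ssubset_iff_of_subset ?_).2 ⟨(s, t), hst, ?_⟩)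
  · rintro ⟨a, b⟩ ⟨hab, ha, hb⟩
    exact ⟨hab, hμ ha, hν hb⟩
  · rintro ⟨-, hs, ht⟩
    tauto

theorem HallCondition.exists_isSubcoupling [DecidableEq S] [DecidableEq T]
    [∀ s t, Decidable (r s t)] (hμ : 0 ≤ μ) (hν : 0 ≤ ν) (h : HallCondition r μ ν) :
    ∃ π, IsSubcoupling r μ ν π := by
  induction hn : (activePairs r μ ν).ncard using Nat.strong_induction_on generalizing μ ν with
  | _ n ih =>
  subst hn
  obtain rfl | hμ0 := eq_or_ne μ 0
  · exact ⟨0, isSubcoupling_zero hν⟩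
  obtain ⟨s, hs⟩ := Function.ne_iff.1 hμ0
  obtain ⟨t, hst, ht⟩ := h.exists_rel_ne_zero ((hμ s).lt_of_ne' hs)
  have hpair : (s, t) ∈ activePairs r μ ν := ⟨hst, hs, ht⟩
  obtain ⟨δ, hδ, hδμ, hδν, h', hcases⟩ := h.exists_transfer hμ hν hst
  set μ' := μ - Pi.single s δ
  set ν' := ν - Pi.single t δ
  have hμ' : 0 ≤ μ' := sub_single_nonneg hμ hδμ
  have hν' : 0 ≤ ν' := sub_single_nonneg hν hδν
  have hsuppμ : support μ' ⊆ support μ := support_sub_single_subset hs δ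
  have hsuppν : support ν' ⊆ support ν := support_sub_single_subset ht δ
  have recurse {μ'' : S → ℝ} {ν'' : T → ℝ} (hμ'' : 0 ≤ μ'') (hν'' : 0 ≤ ν'')
      (h'' : HallCondition r μ'' ν'') (hsuppμ'' : support μ'' ⊆ support μ)
      (hsuppν'' : support ν'' ⊆ support ν) (hzero : μ'' s = 0 ∨ ν'' t = 0) :
      ∃ π, IsSubcoupling r μ'' ν'' π :=
    ih _ (ncard_activePairs_lt hsuppμ'' hsuppν'' hpair hzero) hμ'' hν'' h'' rfl
  suffices ∃ π, IsSubcoupling r μ' ν' π by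
    obtain ⟨π, hπ⟩ := this
    refine ⟨π + Pi.single (s, t) δ, ?_⟩
    simpa [μ', ν'] using hπ.add (isSubcoupling_single hst hδ)
  rcases hcases with hδ | hδ | ⟨C, hsC, htC, htight⟩
  · exact recurse hμ' hν' h' hsuppμ hsuppν (Or.inl (by simp [μ', hδ]))
  · exact recurse hμ' hν' h' hsuppμ hsuppν (Or.inr (by simp [ν', hδ]))
  have hsuppμ_ind (A : Set S) : support (A.indicator μ') ⊆ support μ :=
    Set.support_indicator.trans_subset (Set.inter_subset_right.trans hsuppμ)
  have hsuppν_ind (B : Set T) : support (B.indicator ν') ⊆ support ν :=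
    Set.support_indicator.trans_subset (Set.inter_subset_right.trans hsuppν)
  obtain ⟨π₁, hπ₁⟩ := recurse (Set.indicator_nonneg fun x _ => hμ' x)
    (Set.indicator_nonneg fun y _ => hν' y) (h'.indicator hν' C) (hsuppμ_ind _) (hsuppν_ind _)
    (Or.inl (by simp [hsC]))
  obtain ⟨π₂, hπ₂⟩ := recurse (Set.indicator_nonneg fun x _ => hμ' x)
    (Set.indicator_nonneg fun y _ => hν' y) (h'.indicator_compl htight) (hsuppμ_ind _)
    (hsuppν_ind _) (Or.inr (by simp [htC]))
  exact ⟨π₁ + π₂, by simpa [Set.indicator_self_add_compl] using hπ₁.add hπ₂⟩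

end Strassen

/-- Strassen's theorem, finite version: given probability mass functions `μ` on
a finite set `S` and `ν` on a finite set `T` and a relation `r` between them,
a coupling `π` supported on `r` with marginals `μ` and `ν` exists if and only if
`μ(C) ≤ ν(N(C))` for every `C ⊆ S`, where `N(C)` is the set of `t` related to
some element of `C`. -/
theorem strassen_finite (S T : Type) [Fintype S] [Fintype T]
    [DecidableEq S] [DecidableEq T]
    (r : S → T → Prop) [∀ s t, Decidable (r s t)]
    (μ : S → ℝ) (ν : T → ℝ)
    (hμ0 : ∀ s, 0 ≤ μ s) (hν0 : ∀ t, 0 ≤ ν t)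
    (hμ1 : ∑ s : S, μ s = 1) (hν1 : ∑ t : T, ν t = 1) :
    (∃ π : S × T → ℝ,
      (∀ x, 0 ≤ π x) ∧
      (∀ s : S, ∑ t : T, π (s, t) = μ s) ∧
      (∀ t : T, ∑ s : S, π (s, t) = ν t) ∧
      (∀ x : S × T, 0 < π x → r x.1 x.2)) ↔
    (∀ C : Finset S,
      ∑ s ∈ C, μ s ≤ ∑ t ∈ Finset.filter (fun t : T => ∃ s ∈ C, r s t) Finset.univ, ν t) := by
  constructor
  · rintro ⟨π, hπ0, hrow, hcol, hrel⟩
    exact (Strassen.IsSubcoupling.mk hπ0 hrel hrow fun t => (hcol t).le).hallCondition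
  · intro hall
    obtain ⟨π, hπ⟩ := Strassen.HallCondition.exists_isSubcoupling hμ0 hν0 hall
    exact ⟨π, hπ.nonneg, hπ.sum_row, hπ.sum_col_eq (hμ1.trans hν1.symm), hπ.rel_of_pos⟩
end

section
/- For all real $\alpha < 0$ and all $n \ge 1$, $1 \le k \le n$, the generalized Stirling numbers satisfy $(n - \alpha k)\, S_\alpha(n,k)^2 \ge (n - \alpha(k+1))\, S_\alpha(n,k+1)\, S_\alpha(n,k-1)$. -/
/-- Generalized Stirling numbers: `S_α(1,1) = 1`, `S_α(n,0) = 0` for `n ≥ 1`,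
`S_α(n,k) = 0` for `k > n`, and `S_α(n+1,k) = (n - α k) S_α(n,k) + S_α(n,k-1)`. -/
def genStirling (α : ℝ) : ℕ → ℕ → ℝ
  | 0, k => if k = 0 then 1 else 0
  | n + 1, k =>
      if k = 0 then 0
      else ((n : ℝ) - α * k) * genStirling α n k + genStirling α n (k - 1)

/-!
Write `a_j = S_α(n,j)` and `c_j = n - αj`, so that `S_α(n+1,j) = c_j a_j + a_{j-1}`.
Multiplying the two instances `c_{j+1} a_{j+1} a_{j-1} ≤ c_j a_j²` and
`c_j a_j a_{j-2} ≤ c_{j-1} a_{j-1}²` of the induction hypothesis and dividing by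
`c_j a_j a_{j-1} > 0` gives
`c_{j+1} a_{j+1} a_{j-2} ≤ c_{j-1} a_j a_{j-1}`, and these three bound the expanded product
`c_j S_α(n+1,j+1) S_α(n+1,j-1)` termwise by `c_{j-1} S_α(n+1,j)²`. The passage from the
weights `c` to the weights `n + 1 - αj` costs `α(1 - α) ≤ 0`, which is where `α ≤ 0` enters.
-/

lemma sub_mul_nonneg_of_nonpos {α x y : ℝ} (hα : α ≤ 0) (hx : 0 ≤ x) (hy : 0 ≤ y) :
    0 ≤ x - α * y := by
  nlinarith

lemma sub_mul_pos_of_nonpos {α x y : ℝ} (hα : α ≤ 0) (hx : 0 < x) (hy : 0 ≤ y) :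
    0 < x - α * y := by
  nlinarith

lemma weighted_log_concave_of_recurrence {a₀ a₁ a₂ a₃ c₁ c₂ c₃ : ℝ}
    (ha₀ : 0 ≤ a₀) (ha₁ : 0 < a₁) (ha₂ : 0 < a₂) (hc₁ : 0 ≤ c₁) (hc₂ : 0 < c₂)
    (h₁₃ : c₃ * a₃ * a₁ ≤ c₂ * a₂ ^ 2) (h₀₂ : c₂ * a₂ * a₀ ≤ c₁ * a₁ ^ 2) :
    c₂ * ((c₃ * a₃ + a₂) * (c₁ * a₁ + a₀)) ≤ c₁ * (c₂ * a₂ + a₁) ^ 2 := by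
  have h₀₃ : c₃ * a₃ * a₀ ≤ c₁ * a₂ * a₁ := by
    refine le_of_mul_le_mul_right ?_ (by positivity : 0 < c₂ * a₂ * a₁)
    have := mul_le_mul h₁₃ h₀₂ (by positivity) (by positivity)
    linear_combination this
  linear_combination (c₁ * c₂) * h₁₃ + c₂ * h₀₃ + h₀₂

lemma reweight {c₁ c₂ w₁ w₂ x y : ℝ} (hc₂ : 0 < c₂) (hw₁ : 0 ≤ w₁) (hy : 0 ≤ y)
    (hw : w₁ * c₁ ≤ w₂ * c₂) (h : c₂ * x ≤ c₁ * y) : w₁ * x ≤ w₂ * y := by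
  refine le_of_mul_le_mul_left ?_ hc₂
  linear_combination w₁ * h + y * hw

namespace genStirling

@[simp]
lemma succ_zero (α : ℝ) (n : ℕ) : genStirling α (n + 1) 0 = 0 := by
  simp [genStirling]

lemma succ_succ (α : ℝ) (n k : ℕ) :
    genStirling α (n + 1) (k + 1) =
      ((n : ℝ) - α * (k + 1)) * genStirling α n (k + 1) + genStirling α n k := by
  simp [genStirling]

lemma eq_zero_of_lt (α : ℝ) {n k : ℕ} (h : n < k) : genStirling α n k = 0 := by
  induction n generalizing k with
  | zero => simp [genStirling, Nat.pos_iff_ne_zero.mp h]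
  | succ n ih =>
    obtain ⟨k, rfl⟩ := Nat.exists_eq_add_of_lt (Nat.zero_lt_of_lt h)
    rw [zero_add, succ_succ, ih (by omega), ih (by omega), mul_zero, add_zero]

lemma nonneg {α : ℝ} (hα : α ≤ 0) (n k : ℕ) : 0 ≤ genStirling α n k := by
  induction n generalizing k with
  | zero => unfold genStirling; split_ifs <;> norm_num
  | succ n ih =>
    cases k with
    | zero => simp
    | succ k =>
      rw [succ_succ]
      exact add_nonneg (mul_nonneg (sub_mul_nonneg_of_nonpos hα n.cast_nonneg (by positivity))
        (ih _)) (ih _)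

lemma pos {α : ℝ} (hα : α ≤ 0) {n k : ℕ} (hk : 1 ≤ k) (hkn : k ≤ n) : 0 < genStirling α n k := by
  induction n generalizing k with
  | zero => omega
  | succ n ih =>
    obtain ⟨k, rfl⟩ := Nat.exists_eq_add_of_le' hk
    rw [succ_succ]
    rcases Nat.eq_zero_or_pos k with rfl | hk0
    · rcases Nat.eq_zero_or_pos n with rfl | hn
      · simp [genStirling]
      · exact add_pos_of_pos_of_nonneg
          (mul_pos (sub_mul_pos_of_nonpos hα (by exact_mod_cast hn) (by positivity)) (ih le_rfl hn))
          (nonneg hα n 0)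
    · exact add_pos_of_nonneg_of_pos
        (mul_nonneg (sub_mul_nonneg_of_nonpos hα n.cast_nonneg (by positivity)) (nonneg hα n _))
        (ih hk0 (by omega))

lemma weighted_log_concave {α : ℝ} (hα : α ≤ 0) (n k : ℕ) :
    ((n : ℝ) - α * (k + 2)) * genStirling α n (k + 2) * genStirling α n k ≤
      ((n : ℝ) - α * (k + 1)) * genStirling α n (k + 1) ^ 2 := by
  have rhs_nonneg : ∀ m j : ℕ, 0 ≤ ((m : ℝ) - α * (j + 1)) * genStirling α m (j + 1) ^ 2 :=
    fun m j ↦ mul_nonneg (sub_mul_nonneg_of_nonpos hα m.cast_nonneg (by positivity)) (sq_nonneg _)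
  induction n generalizing k with
  | zero => simpa [eq_zero_of_lt α (by omega : 0 < k + 2)] using rhs_nonneg 0 k
  | succ n ih =>
    rcases k with _ | j
    · simpa using rhs_nonneg (n + 1) 0
    by_cases hjn : n < j + 2
    · simpa [eq_zero_of_lt α (by omega : n + 1 < j + 1 + 2)] using rhs_nonneg (n + 1) (j + 1)
    have hc₂ : 0 < (n : ℝ) - α * (j + 2) :=
      sub_mul_pos_of_nonpos hα (by exact_mod_cast (by omega : 0 < n)) (by positivity)
    have key := weighted_log_concave_of_recurrence (nonneg hα n j)
      (pos hα (by omega) (by omega : j + 1 ≤ n)) (pos hα (by omega) (by omega : j + 2 ≤ n))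
      (sub_mul_nonneg_of_nonpos hα n.cast_nonneg (by positivity))
      hc₂ (by simpa [add_assoc, one_add_one_eq_two] using ih (j + 1)) (ih j)
    have weights : ((n + 1 : ℕ) - α * (j + 3)) * ((n : ℝ) - α * (j + 1)) ≤
        ((n + 1 : ℕ) - α * (j + 2)) * ((n : ℝ) - α * (j + 2)) := by
      push_cast; nlinarith
    have reweighted := reweight hc₂
      (sub_mul_nonneg_of_nonpos hα (n + 1).cast_nonneg (by positivity)) (sq_nonneg _) weights key
    rw [succ_succ, succ_succ, succ_succ]
    push_cast at reweighted ⊢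
    linear_combination reweighted

end genStirling

theorem genStirling_gamma_log_concave_general (α : ℝ) (hα : α < 0) (n k : ℕ)
    (hk1 : 1 ≤ k) :
    ((n : ℝ) - α * (k + 1)) * genStirling α n (k + 1) * genStirling α n (k - 1) ≤
      ((n : ℝ) - α * k) * genStirling α n k ^ 2 := by
  obtain ⟨j, rfl⟩ := Nat.exists_eq_add_of_le' hk1
  simpa [add_assoc, one_add_one_eq_two] using genStirling.weighted_log_concave hα.le n j

/-- For `α < 0`: `(n - αk) S_α(n,k)² ≥ (n - α(k+1)) S_α(n,k+1) S_α(n,k-1)`. -/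
theorem genStirling_gamma_log_concave (α : ℝ) (hα : α < 0) (n k : ℕ)
    (hn : 1 ≤ n) (hk1 : 1 ≤ k) (hkn : k ≤ n) :
    ((n : ℝ) - α * (k + 1)) * genStirling α n (k + 1) * genStirling α n (k - 1) ≤
      ((n : ℝ) - α * k) * genStirling α n k ^ 2 :=
  genStirling_gamma_log_concave_general α hα n k hk1
end

section
/- Let $u:\{0,\dots,n\}\to\mathbb{R}_{\ge0}$ be log-concave with no internal zeros, let $p \in (0,1)$, and for $0 \le k \le n+1$ define $r(k) = \frac{p\,u(k-1)}{p\,u(k-1) + (1-p)\,u(k)}$ (with $u(-1)=u(n+1)=0$). Then $r(k)$ is nondecreasing in $k$. (Probabilistically: if $X$ has pmf proportional to $u$ and $I$ is an independent Bernoulli($p$), then $\Pr[I = 1 \mid X + I = k]$ is nondecreasing in $k$.) -/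
/-! Cross-multiplying, `r k ≤ r (k + 1)` reduces to `p (1 - p) (u (k-1) u (k+1) - u k ^ 2) ≤ 0`,
which is log-concavity at `k`. -/

lemma div_add_le_div_add_of_mul_le_sq {p q a b c : ℝ} (hpq : 0 ≤ p * q) (habc : a * c ≤ b ^ 2)
    (hab : 0 < p * a + q * b) (hbc : 0 < p * b + q * c) :
    p * a / (p * a + q * b) ≤ p * b / (p * b + q * c) := by
  rw [div_le_div_iff₀ hab hbc]
  linear_combination mul_le_mul_of_nonneg_left habc hpq

theorem bayes_ratio_nondecreasing_general (n : ℕ) (u : ℕ → ℝ) (p : ℝ)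
    (hp0 : 0 < p) (hp1 : p < 1)
    (hu0 : ∀ i, 0 ≤ u i)
    (hulc : ∀ i, 1 ≤ i → u (i - 1) * u (i + 1) ≤ u i ^ 2)
    (r : ℕ → ℝ) (hr0 : r 0 = 0)
    (hrs : ∀ k : ℕ, r (k + 1) = p * u k / (p * u k + (1 - p) * u (k + 1))) :
    (r 0 ≤ r 1) ∧
    (∀ k : ℕ, k ≤ n →
      0 < p * u (k - 1) + (1 - p) * u k → 0 < p * u k + (1 - p) * u (k + 1) →
      r k ≤ r (k + 1)) := by
  have hq : 0 ≤ 1 - p := by linarith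
  have hnum : 0 ≤ p * u 0 := mul_nonneg hp0.le (hu0 0)
  have hr01 : r 0 ≤ r 1 := by
    rw [hr0, hrs 0]
    exact div_nonneg hnum (add_nonneg hnum (mul_nonneg hq (hu0 1)))
  refine ⟨hr01, fun k _ hk hk1 => ?_⟩
  cases k with
  | zero => exact hr01
  | succ m =>
    have hlc := hulc (m + 1) (by omega)
    rw [Nat.add_sub_cancel] at hlc hk
    rw [hrs, hrs]
    exact div_add_le_div_add_of_mul_le_sq (mul_nonneg hp0.le hq) hlc hk hk1

/-- Let `u : {0,…,n} → ℝ≥0` be log-concave with no internal zeros (extended by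
zero outside `{0,…,n}`), let `p ∈ (0,1)`, and let
`r(k) = p u(k-1) / (p u(k-1) + (1-p) u(k))` with `u(-1) = u(n+1) = 0`
(so `r 0 = 0`). Then `r` is nondecreasing in `k` on `{0,…,n+1}`, at each step
where the conditioning events `{X + I = k}` and `{X + I = k+1}` have positive
probability. Probabilistically, `r(k) = Pr[I = 1 ∣ X + I = k]` for `X` with
pmf proportional to `u` and `I` an independent Bernoulli(p). -/
theorem bayes_ratio_nondecreasing (n : ℕ) (u : ℕ → ℝ) (p : ℝ)
    (hp0 : 0 < p) (hp1 : p < 1)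
    (hu0 : ∀ i, 0 ≤ u i)
    (husupp : ∀ j, n < j → u j = 0)
    (hulc : ∀ i, 1 ≤ i → u (i - 1) * u (i + 1) ≤ u i ^ 2)
    (hnoz : ∀ i j k : ℕ, i ≤ j → j ≤ k → 0 < u i → 0 < u k → 0 < u j)
    (r : ℕ → ℝ) (hr0 : r 0 = 0)
    (hrs : ∀ k : ℕ, r (k + 1) = p * u k / (p * u k + (1 - p) * u (k + 1))) :
    (r 0 ≤ r 1) ∧
    (∀ k : ℕ, k ≤ n →
      0 < p * u (k - 1) + (1 - p) * u k → 0 < p * u k + (1 - p) * u (k + 1) →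
      r k ≤ r (k + 1)) :=
  bayes_ratio_nondecreasing_general n u p hp0 hp1 hu0 hulc r hr0 hrs
end

section
/- Let $B_1,\dots,B_n$ be independent Bernoulli random variables with parameters $p_i \in (0,1)$. For each $k$ let $\mathcal{S}_k \subset \{0,1\}^n$ be the set of 0-1 vectors with exactly $k$ ones, and let $p^k$ be the law of $(B_1,\dots,B_n)$ conditioned on $\sum_i B_i = k$. Write $b \prec b'$ for $b \in \mathcal{S}_k$, $b' \in \mathcal{S}_{k+1}$ if $b'$ is obtained from $b$ by changing exactly one 0 to a 1. Then for every $C \subseteq \mathcal{S}_k$, $\sum_{b \in C} p^k(b) \le \sum_{b' \in N(C)} p^{k+1}(b')$, where $N(C) = \{b' \in \mathcal{S}_{k+1} : b \prec b' \text{ for some } b \in C\}$. -/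
/-!
Clearing denominators, the claim is `W(C) W(𝒮ₖ₊₁) ≤ W(N C) W(𝒮ₖ)`, a comparison of the weights
`W b W c` of pairs. A pair `(b, c) ∈ C × 𝒮ₖ₊₁` spreads its weight equally over the coordinates `i`
with `b i = 0`, `c i = 1`, and sends each share to the pair obtained by exchanging the `i`-th
entries of `b` and `c`. Exchanging preserves the product weight `W b W c` and the Hamming distance
of the pair, and it is an involution; it lands in `N C × 𝒮ₖ`. For a pair at Hamming distance `d`
whose two vectors have `k` and `k + 1` ones, there are `(d + 1) / 2` coordinates where the
smaller one has a `0` and the larger a `1`, so each share is `2 W b W c / (d + 1)`, and a pair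
of `N C × 𝒮ₖ` receives at most `(d + 1) / 2` shares of its own weight.
-/

open Finset Function

namespace BoolCube

variable {ι : Type*}

section Exchange

variable {β : Type*} [DecidableEq ι]

def swapAt (i : ι) (x : (ι → β) × (ι → β)) : (ι → β) × (ι → β) :=
  (update x.1 i (x.2 i), update x.2 i (x.1 i))

@[simp] lemma swapAt_fst_self (i : ι) (x : (ι → β) × (ι → β)) : (swapAt i x).1 i = x.2 i := by
  simp [swapAt]

@[simp] lemma swapAt_snd_self (i : ι) (x : (ι → β) × (ι → β)) : (swapAt i x).2 i = x.1 i := by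
  simp [swapAt]

@[simp] lemma swapAt_swapAt (i : ι) (x : (ι → β) × (ι → β)) : swapAt i (swapAt i x) = x := by
  simp [swapAt]

lemma hammingDist_swapAt [Fintype ι] [DecidableEq β] (i : ι) (x : (ι → β) × (ι → β)) :
    hammingDist (swapAt i x).1 (swapAt i x).2 = hammingDist x.1 x.2 := by
  unfold hammingDist
  congr 1; ext j; by_cases h : j = i
  · subst h; simp [eq_comm]
  · simp [swapAt, update_apply, h]

lemma prod_mul_prod_swapAt [Fintype ι] {M : Type*} [CommMonoid M] (f : ι → β → M) (i : ι)
    (x : (ι → β) × (ι → β)) :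
    (∏ j, f j ((swapAt i x).1 j)) * ∏ j, f j ((swapAt i x).2 j)
      = (∏ j, f j (x.1 j)) * ∏ j, f j (x.2 j) := by
  simp_rw [← prod_mul_distrib]
  refine prod_congr rfl fun j _ => ?_
  by_cases h : j = i
  · subst h; simp [mul_comm]
  · simp [swapAt, h]

end Exchange

variable [Fintype ι]

def ones (b : ι → Bool) : Finset ι := univ.filter (fun i => b i = true)

@[simp] lemma mem_ones {b : ι → Bool} {i : ι} : i ∈ ones b ↔ b i = true := by simp [ones]

noncomputable def exchangeWeight (W : (ι → Bool) → ℝ) (x : (ι → Bool) × (ι → Bool)) : ℝ :=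
  2 * (W x.1 * W x.2) / (hammingDist x.1 x.2 + 1)

lemma exchangeWeight_swap (W : (ι → Bool) → ℝ) (x : (ι → Bool) × (ι → Bool)) :
    exchangeWeight W x.swap = exchangeWeight W x := by
  simp [exchangeWeight, hammingDist_comm x.2, mul_comm]

variable [DecidableEq ι]

def level (k : ℕ) : Finset (ι → Bool) := univ.filter (fun b => #(ones b) = k)

@[simp] lemma mem_level {b : ι → Bool} {k : ℕ} : b ∈ level k ↔ #(ones b) = k := by simp [level]

lemma level_nonempty {l : ℕ} (hl : l ≤ Fintype.card ι) : (level (ι := ι) l).Nonempty := by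
  obtain ⟨s, -, hs⟩ := exists_subset_card_eq (s := (univ : Finset ι)) (by simpa using hl)
  exact ⟨fun i => decide (i ∈ s), by simp [← hs, ones]⟩

def upperShadow (k : ℕ) (C : Finset (ι → Bool)) : Finset (ι → Bool) :=
  univ.filter (fun b' => #(ones b') = k + 1 ∧ ∃ b ∈ C, ∀ i, b i = true → b' i = true)

lemma mem_upperShadow {k : ℕ} {C : Finset (ι → Bool)} {b' : ι → Bool} :
    b' ∈ upperShadow k C ↔ #(ones b') = k + 1 ∧ ∃ b ∈ C, ∀ i, b i = true → b' i = true := by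
  simp [upperShadow]

lemma card_ones_update_true {b : ι → Bool} {i : ι} (h : b i = false) :
    #(ones (update b i true)) = #(ones b) + 1 := by
  have : ones (update b i true) = insert i (ones b) := by
    ext j; by_cases h : j = i <;> simp [h]
  rw [this, card_insert_of_notMem (by simp [h])]

lemma card_ones_update_false {b : ι → Bool} {i : ι} (h : b i = true) :
    #(ones (update b i false)) + 1 = #(ones b) := by
  have : ones (update b i false) = (ones b).erase i := by
    ext j; by_cases h : j = i <;> simp [h]
  rw [this, card_erase_add_one (by simpa)]

lemma two_mul_card_sdiff_ones {b c : ι → Bool} (h : #(ones c) = #(ones b) + 1) :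
    2 * #(ones c \ ones b) = hammingDist b c + 1 := by
  have hdist : hammingDist b c = #(ones c \ ones b) + #(ones b \ ones c) := by
    rw [hammingDist, ← card_union_of_disjoint disjoint_sdiff_sdiff]
    congr 1; ext i; cases hb : b i <;> cases hc : c i <;> simp [hb, hc]
  have h₁ := card_sdiff_add_card_inter (ones c) (ones b)
  have h₂ := card_sdiff_add_card_inter (ones b) (ones c)
  rw [inter_comm] at h₂
  omega

lemma card_sdiff_ones_mul_exchangeWeight (W : (ι → Bool) → ℝ) {b c : ι → Bool}
    (h : #(ones c) = #(ones b) + 1) :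
    #(ones c \ ones b) * exchangeWeight W (b, c) = W b * W c := by
  have hcard : (2 * #(ones c \ ones b) : ℝ) = hammingDist b c + 1 := by
    exact_mod_cast two_mul_card_sdiff_ones h
  rw [exchangeWeight, mul_div_assoc', ← mul_assoc, mul_comm _ (2 : ℝ), hcard,
    mul_div_cancel_left₀ _ (by positivity)]

lemma sum_sum_exchange {k : ℕ} {C : Finset (ι → Bool)} (hC : ∀ b ∈ C, #(ones b) = k)
    (g : (ι → Bool) × (ι → Bool) → ℝ) (hg : ∀ i x, g (swapAt i x) = g x) :
    ∑ x ∈ C ×ˢ level (k + 1), ∑ _i ∈ ones x.2 \ ones x.1, g x =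
      ∑ x ∈ upperShadow k C ×ˢ level k,
        ∑ _i ∈ (ones x.1 \ ones x.2).filter (fun i => (swapAt i x).1 ∈ C), g x := by
  rw [sum_sigma', sum_sigma']
  refine sum_nbij' (fun y => ⟨swapAt y.2 y.1, y.2⟩) (fun y => ⟨swapAt y.2 y.1, y.2⟩)
    ?_ ?_ (fun y _ => by simp) (fun y _ => by simp) (fun y _ => (hg y.2 y.1).symm)
  · rintro ⟨⟨b, c⟩, i⟩ hy
    simp only [mem_sigma, mem_product, mem_level, mem_sdiff, mem_ones, Bool.not_eq_true] at hy
    obtain ⟨⟨hb, hc⟩, hci, hbi⟩ := hy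
    simp only [mem_sigma, mem_product, mem_level, mem_upperShadow, mem_filter, mem_sdiff,
      mem_ones, Bool.not_eq_true, swapAt_fst_self, swapAt_snd_self, swapAt_swapAt]
    refine ⟨⟨⟨?_, b, hb, fun j hj => ?_⟩, ?_⟩, ⟨hci, hbi⟩, hb⟩
    · simp only [swapAt, hci]
      rw [card_ones_update_true hbi, hC b hb]
    · by_cases h : j = i <;> simp [swapAt, h, hj, hci]
    · have := card_ones_update_false hci
      simp only [swapAt, hbi]
      omega
  · rintro ⟨⟨b, c⟩, i⟩ hy
    simp only [mem_sigma, mem_product, mem_level, mem_upperShadow, mem_filter, mem_sdiff,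
      mem_ones, Bool.not_eq_true] at hy
    obtain ⟨⟨-, hc⟩, ⟨hbi, hci⟩, hswap⟩ := hy
    simp only [mem_sigma, mem_product, mem_level, mem_sdiff, mem_ones, Bool.not_eq_true,
      swapAt_fst_self, swapAt_snd_self]
    refine ⟨⟨hswap, ?_⟩, hbi, hci⟩
    simp only [swapAt, hbi]
    rw [card_ones_update_true hci, hc]

theorem sum_mul_sum_level_succ_le (W : (ι → Bool) → ℝ) (hW0 : ∀ b, 0 ≤ W b)
    (hWswap : ∀ i x, W (swapAt i x).1 * W (swapAt i x).2 = W x.1 * W x.2)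
    {k : ℕ} {C : Finset (ι → Bool)} (hC : ∀ b ∈ C, #(ones b) = k) :
    (∑ b ∈ C, W b) * ∑ c ∈ level (k + 1), W c ≤
      (∑ b ∈ upperShadow k C, W b) * ∑ c ∈ level k, W c := by
  have hswap : ∀ i x, exchangeWeight W (swapAt i x) = exchangeWeight W x := fun i x => by
    rw [exchangeWeight, exchangeWeight, hWswap, hammingDist_swapAt]
  rw [sum_mul_sum, sum_mul_sum, ← sum_product', ← sum_product']
  calc ∑ x ∈ C ×ˢ level (k + 1), W x.1 * W x.2
      = ∑ x ∈ C ×ˢ level (k + 1), ∑ _i ∈ ones x.2 \ ones x.1, exchangeWeight W x := by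
        refine sum_congr rfl fun x hx => ?_
        obtain ⟨hb, hc⟩ := mem_product.1 hx
        rw [sum_const, nsmul_eq_mul, card_sdiff_ones_mul_exchangeWeight W
          (by rw [mem_level.1 hc, hC _ hb])]
    _ = ∑ x ∈ upperShadow k C ×ˢ level k,
          ∑ _i ∈ (ones x.1 \ ones x.2).filter (fun i => (swapAt i x).1 ∈ C), exchangeWeight W x :=
        sum_sum_exchange hC _ hswap
    _ ≤ ∑ x ∈ upperShadow k C ×ˢ level k, ∑ _i ∈ ones x.1 \ ones x.2, exchangeWeight W x :=
        sum_le_sum fun x _ => sum_le_sum_of_subset_of_nonneg (filter_subset _ _)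
          fun _ _ _ => by unfold exchangeWeight; have := hW0 x.1; have := hW0 x.2; positivity
    _ = ∑ x ∈ upperShadow k C ×ˢ level k, W x.1 * W x.2 := by
        refine sum_congr rfl fun x hx => ?_
        obtain ⟨hb, hc⟩ := mem_product.1 hx
        rw [sum_const, nsmul_eq_mul, ← exchangeWeight_swap, mul_comm (W x.1)]
        exact card_sdiff_ones_mul_exchangeWeight W
          (by rw [(mem_upperShadow.1 hb).1, mem_level.1 hc])

end BoolCube

open BoolCube

/-- Strassen's condition holds for the conditional laws of independent
Bernoulli random variables given their sum: for any set `C` of 0-1 vectors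
with exactly `k` ones, the conditional probability of `C` given sum `k` is at
most the conditional probability, given sum `k+1`, of the set `N(C)` of
vectors obtained from an element of `C` by changing exactly one 0 to a 1. -/
theorem strassen_condition_bernoulli (n : ℕ) (p : Fin n → ℝ)
    (hp0 : ∀ i, 0 < p i) (hp1 : ∀ i, p i < 1)
    (W : (Fin n → Bool) → ℝ)
    (hW : ∀ b, W b = ∏ i : Fin n, (if b i then p i else 1 - p i))
    (Z : ℕ → ℝ)
    (hZ : ∀ l, Z l = ∑ b ∈ Finset.univ.filter
      (fun b : Fin n → Bool => (Finset.univ.filter (fun i => b i = true)).card = l), W b)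
    (k : ℕ) (hk : k < n)
    (C : Finset (Fin n → Bool))
    (hC : ∀ b ∈ C, (Finset.univ.filter (fun i => b i = true)).card = k) :
    (∑ b ∈ C, W b) / Z k ≤
      (∑ b' ∈ Finset.univ.filter
        (fun b' : Fin n → Bool =>
          (Finset.univ.filter (fun i => b' i = true)).card = k + 1 ∧
          ∃ b ∈ C, ∀ i, b i = true → b' i = true),
        W b') / Z (k + 1) := by
  have hW_pos (b : Fin n → Bool) : 0 < W b :=
    hW b ▸ prod_pos fun i _ => by cases b i <;> simp [hp0 i, hp1 i]
  have hZ_pos {l : ℕ} (hl : l ≤ n) : 0 < Z l :=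
    hZ l ▸ sum_pos (fun b _ => hW_pos b) (level_nonempty (by simpa using hl))
  have hW_swapAt (i : Fin n) (x : (Fin n → Bool) × (Fin n → Bool)) :
      W (swapAt i x).1 * W (swapAt i x).2 = W x.1 * W x.2 := by
    simp only [hW]
    exact prod_mul_prod_swapAt (fun j v => if v then p j else 1 - p j) i x
  rw [div_le_div_iff₀ (hZ_pos hk.le) (hZ_pos hk), hZ k, hZ (k + 1)]
  -- The decidability instances of the filters here are `Fin`-specific, so they agree with those of
  -- `level` and `upperShadow` only extensionally.
  convert sum_mul_sum_level_succ_le W (fun b => (hW_pos b).le) hW_swapAt hC using 3 <;>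
    ext <;> simp [ones, mem_upperShadow]
end

section
/- Let $w_j = (1-\alpha)_{j-1\uparrow 1}$ for some $\alpha < 1$, and let $\Pi_n$ be a Gibbs$(\mathbf{w})$ partition of $[n]$ conditioned to have $k$ blocks. Let $B_i$ be the indicator that $i$ is the smallest element of its block. Then the law of $(B_1,\dots,B_{n-1})$ given $B_n = 1$ equals the law of the corresponding indicator vector for a Gibbs$(\mathbf{w})$ partition of $[n-1]$ conditioned to have $k-1$ blocks, and given $B_n = 0$ it equals the law for a Gibbs$(\mathbf{w})$ partition of $[n-1]$ conditioned to have $k$ blocks. -/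
/-!
Deleting the last element `n + 1` maps a partition of `[n + 1]` onto a partition of `[n]`, and
the partitions in a fibre are obtained by adding `n + 1` either as a new singleton block or to one
of the blocks `A`. Since `w₁ = 1` and `w_{#A + 1} = (#A - α) w_{#A}`, the first kind of extension
preserves the Gibbs weight, while the second multiplies it by `#A - α`; summed over the `k` blocks
of a partition of `[n]` this factor becomes `n - kα`, which does not depend on the partition and
cancels in the conditional law. Whether `i ≤ n` is the least element of its block is not affected
by deleting the largest element, so every event about `(B₁, …, Bₙ)` is an event about the
partition of `[n]`.
-/

open Finset

noncomputable section

namespace Finpartition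

section PartFunction

variable {ι : Type*} [DecidableEq ι] [Fintype ι] {P : Finpartition (univ : Finset ι)}

lemma mem_parts_iff_exists_part_eq {B : Finset ι} : B ∈ P.parts ↔ ∃ a, P.part a = B := by
  constructor
  · intro hB
    obtain ⟨a, ha⟩ := P.nonempty_of_mem_parts hB
    exact ⟨a, P.part_eq_of_mem hB ha⟩
  · rintro ⟨a, rfl⟩
    exact P.part_mem.2 (mem_univ a)

lemma ext_part {Q : Finpartition (univ : Finset ι)} (h : ∀ a, P.part a = Q.part a) : P = Q := by
  ext B
  simp only [mem_parts_iff_exists_part_eq, h]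

lemma part_eq_of_mem_part {a b : ι} (h : b ∈ P.part a) : P.part b = P.part a :=
  (P.mem_part_iff_part_eq_part (mem_univ b) (mem_univ a)).1 h

lemma mem_part_comm {a b : ι} : b ∈ P.part a ↔ a ∈ P.part b := by
  simp only [mem_part_iff_exists, and_comm]

lemma part_sdiff_of_notMem {A : Finset ι} (hA : A ∈ P.parts) {a : ι} (ha : a ∉ A) :
    P.part a \ A = P.part a :=
  sdiff_eq_self_of_disjoint <| P.disjoint (P.part_mem.2 (mem_univ a)) hA
    fun h => ha (h ▸ P.mem_part (mem_univ a))

def ofPart (f : ι → Finset ι) (mem_self : ∀ a, a ∈ f a)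
    (eq_of_mem : ∀ a b, b ∈ f a → f b = f a) : Finpartition (univ : Finset ι) :=
  ofExistsUnique (univ.image f) (fun _ _ => subset_univ _)
    (fun a _ => ⟨f a, ⟨mem_image_of_mem f (mem_univ a), mem_self a⟩, by
      rintro _ ⟨hB, ha⟩
      obtain ⟨b, -, rfl⟩ := mem_image.1 hB
      exact (eq_of_mem b a ha).symm⟩)
    (fun h => by
      obtain ⟨a, -, ha⟩ := mem_image.1 h
      exact notMem_empty a (ha ▸ mem_self a))

@[simp]
lemma part_ofPart {f : ι → Finset ι} {mem_self : ∀ a, a ∈ f a}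
    {eq_of_mem : ∀ a b, b ∈ f a → f b = f a} (a : ι) :
    (ofPart f mem_self eq_of_mem).part a = f a :=
  part_eq_of_mem _ (mem_image_of_mem f (mem_univ a)) (mem_self a)

end PartFunction

section GibbsWeight

variable {ι : Type*} (α : ℝ)

/-- `blockWeight α A` is the weight `w_{#A} = (1 - α)(2 - α)⋯(#A - 1 - α)` of the paper. -/
def blockWeight (A : Finset ι) : ℝ := ∏ m ∈ range (#A - 1), (1 - α + m)

def gibbsWeight [DecidableEq ι] {s : Finset ι} (P : Finpartition s) : ℝ :=
  ∏ A ∈ P.parts, blockWeight α A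

@[simp]
lemma blockWeight_singleton (a : ι) : blockWeight α {a} = 1 := by
  simp [blockWeight]

@[simp]
lemma blockWeight_map {κ : Type*} (f : ι ↪ κ) (A : Finset ι) :
    blockWeight α (A.map f) = blockWeight α A := by
  simp [blockWeight]

lemma blockWeight_insert [DecidableEq ι] {a : ι} {A : Finset ι} (ha : a ∉ A)
    (hA : A.Nonempty) : blockWeight α (insert a A) = (#A - α) * blockWeight α A := by
  obtain ⟨m, hm⟩ := Nat.exists_eq_succ_of_ne_zero hA.card_pos.ne'
  rw [blockWeight, blockWeight, card_insert_of_notMem ha, hm, Nat.add_sub_cancel,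
    Nat.succ_sub_one, prod_range_succ]
  push_cast
  ring

lemma sum_card_parts_sub [DecidableEq ι] {s : Finset ι} (P : Finpartition s) :
    ∑ A ∈ P.parts, ((#A : ℝ) - α) = #s - #P.parts * α := by
  rw [sum_sub_distrib, ← Nat.cast_sum, P.sum_card_parts, sum_const, nsmul_eq_mul]

end GibbsWeight

/-- An `abbrev`, so that the `∀ b ∈ P.part a, a ≤ b` it unfolds to is decidable. -/
abbrev IsPartMin {ι : Type*} [DecidableEq ι] [LE ι] {s : Finset ι} (P : Finpartition s)
    (a : ι) : Prop :=
  ∀ b ∈ P.part a, a ≤ b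

end Finpartition

namespace Finset

variable {n : ℕ}

def castSuccPreimage (B : Finset (Fin (n + 1))) : Finset (Fin n) :=
  B.preimage Fin.castSucc (Fin.castSucc_injective n).injOn

@[simp]
lemma mem_castSuccPreimage {B : Finset (Fin (n + 1))} {i : Fin n} :
    i ∈ castSuccPreimage B ↔ i.castSucc ∈ B :=
  mem_preimage

@[simp]
lemma castSuccPreimage_map (A : Finset (Fin n)) :
    castSuccPreimage (A.map Fin.castSuccEmb) = A :=
  preimage_map Fin.castSuccEmb A

@[simp]
lemma castSuccPreimage_insert_last (B : Finset (Fin (n + 1))) :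
    castSuccPreimage (insert (Fin.last n) B) = castSuccPreimage B := by
  ext i
  simp

lemma map_castSuccPreimage (B : Finset (Fin (n + 1))) :
    (castSuccPreimage B).map Fin.castSuccEmb = B.erase (Fin.last n) := by
  ext x
  induction x using Fin.lastCases <;> simp

@[simp]
lemma last_notMem_map_castSuccEmb (A : Finset (Fin n)) :
    Fin.last n ∉ A.map Fin.castSuccEmb := by
  simp

lemma notMem_map_mapEmbedding_of_last_mem {B : Finset (Fin (n + 1))} (hB : Fin.last n ∈ B)
    (S : Finset (Finset (Fin n))) : B ∉ S.map (mapEmbedding Fin.castSuccEmb).toEmbedding := by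
  simp only [mem_map, RelEmbedding.coe_toEmbedding, mapEmbedding_apply, not_exists, not_and]
  rintro A - rfl
  exact last_notMem_map_castSuccEmb A hB

end Finset

namespace Finpartition

variable {n : ℕ} (α : ℝ) (P : Finpartition (univ : Finset (Fin (n + 1))))
  (Q : Finpartition (univ : Finset (Fin n)))

def eraseLast : Finpartition (univ : Finset (Fin n)) :=
  ofPart (fun i => castSuccPreimage (P.part i.castSucc))
    (fun _ => mem_castSuccPreimage.2 (P.mem_part (mem_univ _)))
    (fun _ _ hj => by rw [part_eq_of_mem_part (mem_castSuccPreimage.1 hj)])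

def addLastSingleton : Finpartition (univ : Finset (Fin (n + 1))) :=
  ofPart (Fin.lastCases {Fin.last n} fun i => (Q.part i).map Fin.castSuccEmb)
    (fun x => by induction x using Fin.lastCases <;> simp)
    (fun x y => by
      induction x using Fin.lastCases <;> induction y using Fin.lastCases <;> simp
      exact part_eq_of_mem_part)

/-- Adds `last` to the block `A`. Removing `A` from the other blocks makes this a partition for
every `A`, with `addLastTo Q ∅ = addLastSingleton Q`. -/
def addLastTo (A : Finset (Fin n)) : Finpartition (univ : Finset (Fin (n + 1))) :=
  ofPart (Fin.lastCases (insert (Fin.last n) (A.map Fin.castSuccEmb)) fun i =>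
      if i ∈ A then insert (Fin.last n) (A.map Fin.castSuccEmb)
      else (Q.part i \ A).map Fin.castSuccEmb)
    (fun x => by induction x using Fin.lastCases <;> simp; split_ifs <;> simp [*])
    (fun x y => by
      induction x using Fin.lastCases <;> induction y using Fin.lastCases <;>
        simp only [Fin.lastCases_last, Fin.lastCases_castSucc] <;> (try split_ifs) <;> simp_all
      exact fun h => by rw [part_eq_of_mem_part h])

@[simp]
lemma part_eraseLast (i : Fin n) : P.eraseLast.part i = castSuccPreimage (P.part i.castSucc) :=
  part_ofPart i

@[simp]
lemma part_addLastSingleton_last : Q.addLastSingleton.part (Fin.last n) = {Fin.last n} := by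
  simp [addLastSingleton]

@[simp]
lemma part_addLastSingleton_castSucc (i : Fin n) :
    Q.addLastSingleton.part i.castSucc = (Q.part i).map Fin.castSuccEmb := by
  simp [addLastSingleton]

@[simp]
lemma part_addLastTo_last (A : Finset (Fin n)) :
    (Q.addLastTo A).part (Fin.last n) = insert (Fin.last n) (A.map Fin.castSuccEmb) := by
  simp [addLastTo]

lemma part_addLastTo_castSucc (A : Finset (Fin n)) (i : Fin n) :
    (Q.addLastTo A).part i.castSucc = if i ∈ A then insert (Fin.last n) (A.map Fin.castSuccEmb)
      else (Q.part i \ A).map Fin.castSuccEmb := by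
  simp [addLastTo]

variable {Q} in
lemma part_addLastTo_castSucc_of_mem {A : Finset (Fin n)} {i : Fin n} (hi : i ∈ A) :
    (Q.addLastTo A).part i.castSucc = insert (Fin.last n) (A.map Fin.castSuccEmb) := by
  simp [addLastTo, hi]

lemma part_addLastTo_castSucc_of_notMem {A : Finset (Fin n)} (hA : A ∈ Q.parts) {i : Fin n}
    (hi : i ∉ A) : (Q.addLastTo A).part i.castSucc = (Q.part i).map Fin.castSuccEmb := by
  simp [addLastTo, hi, part_sdiff_of_notMem hA hi]

lemma parts_addLastSingleton : Q.addLastSingleton.parts =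
    insert {Fin.last n} (Q.parts.map (mapEmbedding Fin.castSuccEmb).toEmbedding) := by
  ext B
  simp [mem_parts_iff_exists_part_eq (P := Q.addLastSingleton),
    mem_parts_iff_exists_part_eq (P := Q), Fin.exists_fin_succ', or_comm, eq_comm]

lemma parts_addLastTo {A : Finset (Fin n)} (hA : A ∈ Q.parts) : (Q.addLastTo A).parts =
    insert (insert (Fin.last n) (A.map Fin.castSuccEmb))
      ((Q.parts.erase A).map (mapEmbedding Fin.castSuccEmb).toEmbedding) := by
  ext B
  simp only [mem_parts_iff_exists_part_eq (P := Q.addLastTo A), Fin.exists_fin_succ',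
    part_addLastTo_last, mem_insert, mem_map, mem_erase, RelEmbedding.coe_toEmbedding,
    mapEmbedding_apply]
  constructor
  · rintro (⟨i, rfl⟩ | rfl)
    · by_cases hi : i ∈ A
      · exact Or.inl (part_addLastTo_castSucc_of_mem hi)
      · exact Or.inr ⟨Q.part i, ⟨(Q.part_eq_iff_mem hA).not.2 hi, Q.part_mem.2 (mem_univ i)⟩,
          (Q.part_addLastTo_castSucc_of_notMem hA hi).symm⟩
    · exact Or.inl rfl
  · rintro (rfl | ⟨C, ⟨hCA, hC⟩, rfl⟩)
    · exact Or.inr rfl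
    · obtain ⟨i, rfl⟩ := mem_parts_iff_exists_part_eq.1 hC
      exact Or.inl ⟨i, Q.part_addLastTo_castSucc_of_notMem hA (mt (Q.part_eq_iff_mem hA).2 hCA)⟩

lemma card_parts_addLastSingleton : #Q.addLastSingleton.parts = #Q.parts + 1 := by
  rw [parts_addLastSingleton,
    card_insert_of_notMem (notMem_map_mapEmbedding_of_last_mem (mem_singleton_self _) _),
    card_map]

lemma card_parts_addLastTo {A : Finset (Fin n)} (hA : A ∈ Q.parts) :
    #(Q.addLastTo A).parts = #Q.parts := by
  rw [parts_addLastTo Q hA,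
    card_insert_of_notMem (notMem_map_mapEmbedding_of_last_mem (mem_insert_self _ _) _),
    card_map, card_erase_add_one hA]

lemma gibbsWeight_addLastSingleton : Q.addLastSingleton.gibbsWeight α = Q.gibbsWeight α := by
  rw [gibbsWeight, parts_addLastSingleton,
    prod_insert (notMem_map_mapEmbedding_of_last_mem (mem_singleton_self _) _), prod_map]
  simp [gibbsWeight]

lemma gibbsWeight_addLastTo {A : Finset (Fin n)} (hA : A ∈ Q.parts) :
    (Q.addLastTo A).gibbsWeight α = (#A - α) * Q.gibbsWeight α := by
  rw [gibbsWeight, parts_addLastTo Q hA,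
    prod_insert (notMem_map_mapEmbedding_of_last_mem (mem_insert_self _ _) _), prod_map,
    blockWeight_insert α (by simp) (by simpa using Q.nonempty_of_mem_parts hA), gibbsWeight,
    ← mul_prod_erase _ _ hA]
  simp [mul_assoc]

@[simp]
lemma eraseLast_addLastSingleton : Q.addLastSingleton.eraseLast = Q :=
  ext_part fun i => by simp

lemma eraseLast_addLastTo {A : Finset (Fin n)} (hA : A ∈ Q.parts) :
    (Q.addLastTo A).eraseLast = Q :=
  ext_part fun i => by
    by_cases hi : i ∈ A
    · simp [part_addLastTo_castSucc_of_mem hi, (Q.part_eq_iff_mem hA).2 hi]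
    · simp [Q.part_addLastTo_castSucc_of_notMem hA hi]

lemma addLastTo_empty : Q.addLastTo ∅ = Q.addLastSingleton :=
  ext_part fun x => by induction x using Fin.lastCases <;> simp [part_addLastTo_castSucc]

lemma addLastTo_eraseLast :
    P.eraseLast.addLastTo (castSuccPreimage (P.part (Fin.last n))) = P := by
  have hL := P.mem_part (mem_univ (Fin.last n))
  refine ext_part fun x => ?_
  induction x using Fin.lastCases with
  | last => rw [part_addLastTo_last, map_castSuccPreimage, insert_erase hL]
  | cast i =>
    by_cases hi : i.castSucc ∈ P.part (Fin.last n)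
    · rw [part_addLastTo_castSucc_of_mem (mem_castSuccPreimage.2 hi), map_castSuccPreimage,
        insert_erase hL, part_eq_of_mem_part hi]
    · have hdisj : Disjoint (castSuccPreimage (P.part i.castSucc))
          (castSuccPreimage (P.part (Fin.last n))) := by
        refine disjoint_left.2 fun j hj hj' => hi ?_
        rw [← part_eq_of_mem_part (mem_castSuccPreimage.1 hj'),
          part_eq_of_mem_part (mem_castSuccPreimage.1 hj)]
        exact P.mem_part (mem_univ _)
      rw [part_addLastTo_castSucc, if_neg (mt mem_castSuccPreimage.1 hi), part_eraseLast,
        sdiff_eq_self_of_disjoint hdisj, map_castSuccPreimage,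
        erase_eq_of_notMem fun h => hi (mem_part_comm.1 h)]

lemma castSuccPreimage_part_last_eq_empty_iff :
    castSuccPreimage (P.part (Fin.last n)) = ∅ ↔ P.IsPartMin (Fin.last n) := by
  simp [IsPartMin, eq_empty_iff_forall_notMem, Fin.forall_fin_succ']

lemma addLastSingleton_eraseLast (h : P.IsPartMin (Fin.last n)) :
    P.eraseLast.addLastSingleton = P := by
  rw [← addLastTo_empty, ← (castSuccPreimage_part_last_eq_empty_iff P).2 h, addLastTo_eraseLast]

lemma castSuccPreimage_part_last_mem (h : ¬ P.IsPartMin (Fin.last n)) :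
    castSuccPreimage (P.part (Fin.last n)) ∈ P.eraseLast.parts := by
  obtain ⟨i, hi⟩ :=
    nonempty_iff_ne_empty.2 ((castSuccPreimage_part_last_eq_empty_iff P).not.2 h)
  exact mem_parts_iff_exists_part_eq.2
    ⟨i, by rw [part_eraseLast, part_eq_of_mem_part (mem_castSuccPreimage.1 hi)]⟩

lemma isPartMin_eraseLast (i : Fin n) : P.eraseLast.IsPartMin i ↔ P.IsPartMin i.castSucc := by
  simp [IsPartMin, Fin.forall_fin_succ', Fin.le_last]

lemma isPartMin_addLastSingleton_last : Q.addLastSingleton.IsPartMin (Fin.last n) := by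
  simp [IsPartMin]

lemma not_isPartMin_addLastTo_last {A : Finset (Fin n)} (hA : A.Nonempty) :
    ¬ (Q.addLastTo A).IsPartMin (Fin.last n) := by
  rw [← castSuccPreimage_part_last_eq_empty_iff, part_addLastTo_last,
    castSuccPreimage_insert_last, castSuccPreimage_map]
  exact hA.ne_empty

section ConditionalSums

variable (p : Finpartition (univ : Finset (Fin n)) → Prop)
  (q : Finpartition (univ : Finset (Fin (n + 1))) → Prop) [DecidablePred p] [DecidablePred q]

theorem sum_gibbsWeight_isPartMin_last {k : ℕ} (hk : 1 ≤ k)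
    (hq : ∀ P, q P ↔ p P.eraseLast) :
    ∑ P ∈ univ.filter (fun P => #P.parts = k ∧ P.IsPartMin (Fin.last n) ∧ q P),
        P.gibbsWeight α =
      ∑ Q ∈ univ.filter (fun Q => #Q.parts = k - 1 ∧ p Q), Q.gibbsWeight α := by
  refine sum_nbij' eraseLast addLastSingleton ?_ ?_ ?_ ?_ ?_ <;>
    simp only [mem_filter, mem_univ, true_and]
  · rintro P ⟨hcard, hmin, hqP⟩
    rw [← addLastSingleton_eraseLast P hmin, card_parts_addLastSingleton] at hcard
    exact ⟨by omega, (hq P).1 hqP⟩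
  · rintro Q ⟨hcard, hpQ⟩
    refine ⟨by rw [card_parts_addLastSingleton]; omega, isPartMin_addLastSingleton_last Q, ?_⟩
    rwa [hq, eraseLast_addLastSingleton]
  · rintro P ⟨-, hmin, -⟩
    exact addLastSingleton_eraseLast P hmin
  · exact fun Q _ => eraseLast_addLastSingleton Q
  · rintro P ⟨-, hmin, -⟩
    rw [← gibbsWeight_addLastSingleton α P.eraseLast, addLastSingleton_eraseLast P hmin]

theorem sum_gibbsWeight_not_isPartMin_last_eq_sum_sigma (k : ℕ)
    (hq : ∀ P, q P ↔ p P.eraseLast) :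
    ∑ P ∈ univ.filter (fun P => #P.parts = k ∧ ¬ P.IsPartMin (Fin.last n) ∧ q P),
        P.gibbsWeight α =
      ∑ x ∈ (univ.filter (fun Q => #Q.parts = k ∧ p Q)).sigma parts,
        ((#x.2 : ℝ) - α) * x.1.gibbsWeight α := by
  refine sum_nbij' (fun P => ⟨P.eraseLast, castSuccPreimage (P.part (Fin.last n))⟩)
    (fun x => x.1.addLastTo x.2) ?_ ?_ ?_ ?_ ?_ <;>
    simp only [mem_sigma, mem_filter, mem_univ, true_and]
  · rintro P ⟨hcard, hmin, hqP⟩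
    have hA := castSuccPreimage_part_last_mem P hmin
    rw [← addLastTo_eraseLast P, card_parts_addLastTo _ hA] at hcard
    exact ⟨⟨hcard, (hq P).1 hqP⟩, hA⟩
  · rintro ⟨Q, A⟩ ⟨⟨hcard, hpQ⟩, hA⟩
    refine ⟨by rwa [card_parts_addLastTo Q hA],
      not_isPartMin_addLastTo_last Q (Q.nonempty_of_mem_parts hA), ?_⟩
    rwa [hq, eraseLast_addLastTo Q hA]
  · exact fun P _ => addLastTo_eraseLast P
  · rintro ⟨Q, A⟩ ⟨-, hA⟩
    simp [eraseLast_addLastTo Q hA]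
  · rintro P ⟨-, hmin, -⟩
    rw [← gibbsWeight_addLastTo α _ (castSuccPreimage_part_last_mem P hmin), addLastTo_eraseLast]

theorem sum_gibbsWeight_not_isPartMin_last (k : ℕ) (hq : ∀ P, q P ↔ p P.eraseLast) :
    ∑ P ∈ univ.filter (fun P => #P.parts = k ∧ ¬ P.IsPartMin (Fin.last n) ∧ q P),
        P.gibbsWeight α =
      (n - k * α) * ∑ Q ∈ univ.filter (fun Q => #Q.parts = k ∧ p Q), Q.gibbsWeight α := by
  rw [sum_gibbsWeight_not_isPartMin_last_eq_sum_sigma α p q k hq, sum_sigma, mul_sum]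
  refine sum_congr rfl fun Q hQ => ?_
  dsimp only
  rw [← sum_mul, sum_card_parts_sub, card_univ, Fintype.card_fin, (mem_filter.1 hQ).2.1]

theorem ratio_sum_gibbsWeight_isPartMin_last {k : ℕ} (hk : 1 ≤ k)
    (hq : ∀ P, q P ↔ p P.eraseLast) :
    (∑ P ∈ univ.filter (fun P => #P.parts = k ∧ P.IsPartMin (Fin.last n) ∧ q P),
        P.gibbsWeight α) /
      (∑ P ∈ univ.filter (fun P : Finpartition (univ : Finset (Fin (n + 1))) =>
        #P.parts = k ∧ P.IsPartMin (Fin.last n)), P.gibbsWeight α) =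
    (∑ Q ∈ univ.filter (fun Q => #Q.parts = k - 1 ∧ p Q), Q.gibbsWeight α) /
      ∑ Q ∈ univ.filter (fun Q : Finpartition (univ : Finset (Fin n)) => #Q.parts = k - 1),
        Q.gibbsWeight α := by
  have hden := sum_gibbsWeight_isPartMin_last (n := n) α (fun _ => True) (fun _ => True) hk
    fun _ => .rfl
  simp only [and_true] at hden
  rw [sum_gibbsWeight_isPartMin_last α p q hk hq, hden]

theorem ratio_sum_gibbsWeight_not_isPartMin_last (hα : α < 1) {k : ℕ} (hk : 1 ≤ k)
    (hkn : k ≤ n) (hq : ∀ P, q P ↔ p P.eraseLast) :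
    (∑ P ∈ univ.filter (fun P => #P.parts = k ∧ ¬ P.IsPartMin (Fin.last n) ∧ q P),
        P.gibbsWeight α) /
      (∑ P ∈ univ.filter (fun P : Finpartition (univ : Finset (Fin (n + 1))) =>
        #P.parts = k ∧ ¬ P.IsPartMin (Fin.last n)), P.gibbsWeight α) =
    (∑ Q ∈ univ.filter (fun Q => #Q.parts = k ∧ p Q), Q.gibbsWeight α) /
      ∑ Q ∈ univ.filter (fun Q : Finpartition (univ : Finset (Fin n)) => #Q.parts = k),
        Q.gibbsWeight α := by
  have hden := sum_gibbsWeight_not_isPartMin_last (n := n) α (fun _ => True) (fun _ => True) k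
    fun _ => .rfl
  simp only [and_true] at hden
  have hpos : 0 < (n : ℝ) - k * α := by
    have : (1 : ℝ) ≤ k := by exact_mod_cast hk
    have : (k : ℝ) ≤ n := by exact_mod_cast hkn
    nlinarith
  rw [sum_gibbsWeight_not_isPartMin_last α p q k hq, hden, mul_div_mul_left _ _ hpos.ne']

end ConditionalSums

end Finpartition

end

theorem gibbs_conditioned_deletion_general (α : ℝ) (hα : α < 1) (n : ℕ)
    (k : ℕ) (hk1 : 1 ≤ k) (v : Fin n → Bool) :
    (2 ≤ k →
      (∑ P ∈ Finset.univ.filter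
          (fun P : Finpartition (Finset.univ : Finset (Fin (n + 1))) =>
            P.parts.card = k ∧
            (∀ j ∈ P.part (Fin.last n), Fin.last n ≤ j) ∧
            (∀ i : Fin n, ((∀ j ∈ P.part i.castSucc, i.castSucc ≤ j) ↔ v i = true))),
          ∏ A ∈ P.parts, ∏ m ∈ Finset.range (A.card - 1), (1 - α + m)) /
      (∑ P ∈ Finset.univ.filter
          (fun P : Finpartition (Finset.univ : Finset (Fin (n + 1))) =>
            P.parts.card = k ∧ (∀ j ∈ P.part (Fin.last n), Fin.last n ≤ j)),
          ∏ A ∈ P.parts, ∏ m ∈ Finset.range (A.card - 1), (1 - α + m)) =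
      (∑ Q ∈ Finset.univ.filter
          (fun Q : Finpartition (Finset.univ : Finset (Fin n)) =>
            Q.parts.card = k - 1 ∧
            (∀ i : Fin n, ((∀ j ∈ Q.part i, i ≤ j) ↔ v i = true))),
          ∏ A ∈ Q.parts, ∏ m ∈ Finset.range (A.card - 1), (1 - α + m)) /
      (∑ Q ∈ Finset.univ.filter
          (fun Q : Finpartition (Finset.univ : Finset (Fin n)) =>
            Q.parts.card = k - 1),
          ∏ A ∈ Q.parts, ∏ m ∈ Finset.range (A.card - 1), (1 - α + m))) ∧
    (k ≤ n →
      (∑ P ∈ Finset.univ.filter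
          (fun P : Finpartition (Finset.univ : Finset (Fin (n + 1))) =>
            P.parts.card = k ∧
            ¬ (∀ j ∈ P.part (Fin.last n), Fin.last n ≤ j) ∧
            (∀ i : Fin n, ((∀ j ∈ P.part i.castSucc, i.castSucc ≤ j) ↔ v i = true))),
          ∏ A ∈ P.parts, ∏ m ∈ Finset.range (A.card - 1), (1 - α + m)) /
      (∑ P ∈ Finset.univ.filter
          (fun P : Finpartition (Finset.univ : Finset (Fin (n + 1))) =>
            P.parts.card = k ∧ ¬ (∀ j ∈ P.part (Fin.last n), Fin.last n ≤ j)),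
          ∏ A ∈ P.parts, ∏ m ∈ Finset.range (A.card - 1), (1 - α + m)) =
      (∑ Q ∈ Finset.univ.filter
          (fun Q : Finpartition (Finset.univ : Finset (Fin n)) =>
            Q.parts.card = k ∧
            (∀ i : Fin n, ((∀ j ∈ Q.part i, i ≤ j) ↔ v i = true))),
          ∏ A ∈ Q.parts, ∏ m ∈ Finset.range (A.card - 1), (1 - α + m)) /
      (∑ Q ∈ Finset.univ.filter
          (fun Q : Finpartition (Finset.univ : Finset (Fin n)) =>
            Q.parts.card = k),
          ∏ A ∈ Q.parts, ∏ m ∈ Finset.range (A.card - 1), (1 - α + m))) := by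
  have hv : ∀ P : Finpartition (univ : Finset (Fin (n + 1))),
      (∀ i : Fin n, (P.IsPartMin i.castSucc ↔ v i = true)) ↔
        ∀ i : Fin n, (P.eraseLast.IsPartMin i ↔ v i = true) := by
    simp only [Finpartition.isPartMin_eraseLast, implies_true]
  exact ⟨fun _ => Finpartition.ratio_sum_gibbsWeight_isPartMin_last α _ _ hk1 hv,
    fun hkn => Finpartition.ratio_sum_gibbsWeight_not_isPartMin_last α _ _ hα hk1 hkn hv⟩

/-- Deletion property of conditioned Gibbs(w) partitions with weights
`w_j = (1-α)(2-α)⋯(j-1-α)`, `α < 1`. Let `Π` be a Gibbs(w) partition of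
`[n+1]` conditioned to have `k` blocks and let `B_i` indicate that `i` is the
smallest element of its block. Then, conditionally on `B_{n+1} = 1`, the
vector `(B_1,…,B_n)` has the law of the corresponding indicator vector of a
Gibbs(w) partition of `[n]` conditioned to have `k-1` blocks; conditionally
on `B_{n+1} = 0` it has the law of the indicator vector for a Gibbs(w)
partition of `[n]` conditioned to have `k` blocks. Here laws are expressed as
ratios of sums of Gibbs weights. -/
theorem gibbs_conditioned_deletion (α : ℝ) (hα : α < 1) (n : ℕ) (hn : 1 ≤ n)
    (k : ℕ) (hk1 : 1 ≤ k) (hkn : k ≤ n + 1) (v : Fin n → Bool) :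
    (2 ≤ k →
      (∑ P ∈ Finset.univ.filter
          (fun P : Finpartition (Finset.univ : Finset (Fin (n + 1))) =>
            P.parts.card = k ∧
            (∀ j ∈ P.part (Fin.last n), Fin.last n ≤ j) ∧
            (∀ i : Fin n, ((∀ j ∈ P.part i.castSucc, i.castSucc ≤ j) ↔ v i = true))),
          ∏ A ∈ P.parts, ∏ m ∈ Finset.range (A.card - 1), (1 - α + m)) /
      (∑ P ∈ Finset.univ.filter
          (fun P : Finpartition (Finset.univ : Finset (Fin (n + 1))) =>
            P.parts.card = k ∧ (∀ j ∈ P.part (Fin.last n), Fin.last n ≤ j)),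
          ∏ A ∈ P.parts, ∏ m ∈ Finset.range (A.card - 1), (1 - α + m)) =
      (∑ Q ∈ Finset.univ.filter
          (fun Q : Finpartition (Finset.univ : Finset (Fin n)) =>
            Q.parts.card = k - 1 ∧
            (∀ i : Fin n, ((∀ j ∈ Q.part i, i ≤ j) ↔ v i = true))),
          ∏ A ∈ Q.parts, ∏ m ∈ Finset.range (A.card - 1), (1 - α + m)) /
      (∑ Q ∈ Finset.univ.filter
          (fun Q : Finpartition (Finset.univ : Finset (Fin n)) =>
            Q.parts.card = k - 1),
          ∏ A ∈ Q.parts, ∏ m ∈ Finset.range (A.card - 1), (1 - α + m))) ∧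
    (k ≤ n →
      (∑ P ∈ Finset.univ.filter
          (fun P : Finpartition (Finset.univ : Finset (Fin (n + 1))) =>
            P.parts.card = k ∧
            ¬ (∀ j ∈ P.part (Fin.last n), Fin.last n ≤ j) ∧
            (∀ i : Fin n, ((∀ j ∈ P.part i.castSucc, i.castSucc ≤ j) ↔ v i = true))),
          ∏ A ∈ P.parts, ∏ m ∈ Finset.range (A.card - 1), (1 - α + m)) /
      (∑ P ∈ Finset.univ.filter
          (fun P : Finpartition (Finset.univ : Finset (Fin (n + 1))) =>
            P.parts.card = k ∧ ¬ (∀ j ∈ P.part (Fin.last n), Fin.last n ≤ j)),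
          ∏ A ∈ P.parts, ∏ m ∈ Finset.range (A.card - 1), (1 - α + m)) =
      (∑ Q ∈ Finset.univ.filter
          (fun Q : Finpartition (Finset.univ : Finset (Fin n)) =>
            Q.parts.card = k ∧
            (∀ i : Fin n, ((∀ j ∈ Q.part i, i ≤ j) ↔ v i = true))),
          ∏ A ∈ Q.parts, ∏ m ∈ Finset.range (A.card - 1), (1 - α + m)) /
      (∑ Q ∈ Finset.univ.filter
          (fun Q : Finpartition (Finset.univ : Finset (Fin n)) =>
            Q.parts.card = k),
          ∏ A ∈ Q.parts, ∏ m ∈ Finset.range (A.card - 1), (1 - α + m))) :=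
  gibbs_conditioned_deletion_general α hα n k hk1 v
end
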